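/- arXiv:1811.07804 — 7 statements merged into one kernel-verified Lean document; each statement's English description precedes it below -/
import Mathlib

section
/- Let P₁, P₂ be symmetric positive definite n×n real matrices and T₁, T₂ invertible n×n real matrices with T₁ᵀ * P₁⁻¹ * T₁ = T₂ᵀ * P₂⁻¹ * T₂, and let A := P₂ * (T₂ᵀ)⁻¹ * T₁ᵀ * P₁⁻¹. Then the pushforward of the centered multivariate Gaussian measure on ℝⁿ with covariance matrix P₁ under the linear map given by A is the centered multivariate Gaussian measure on ℝⁿ with covariance matrix P₂. -/
/-!
A centred Gaussian with covariance `S` pushed forward along a linear map `A` is the centred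
Gaussian with covariance `A * S * Aᵀ`: both are Gaussian with mean zero and their covariance
bilinear forms agree. The square root used in `centeredGaussian` is `CFC.sqrt P`, so
`centeredGaussian P` is Mathlib's `multivariateGaussian 0 P` read in coordinates, and the theorem
reduces to the matrix identity `A * P₁ * Aᵀ = P₂`, which is the equivalence condition
`T₁ᵀ P₁⁻¹ T₁ = T₂ᵀ P₂⁻¹ T₂` sandwiched between `P₂ (T₂ᵀ)⁻¹` and its transpose.
-/

open Matrix MeasureTheory ProbabilityTheory

/-- The standard Gaussian measure on `ℝⁿ` (product of standard normals). -/
noncomputable def stdGaussian (n : ℕ) : Measure (Fin n → ℝ) :=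
  Measure.pi fun _ => gaussianReal 0 1

/-- The centered multivariate Gaussian measure on `ℝⁿ` with (positive semidefinite)
covariance matrix `P`: the pushforward of the standard Gaussian under the positive
semidefinite square root of `P`, which indeed has mean zero and covariance
`P.sqrt * P.sqrtᵀ = P`. -/
noncomputable def centeredGaussian {n : ℕ} (P : Matrix (Fin n) (Fin n) ℝ)
    (hP : P.PosSemidef) : Measure (Fin n → ℝ) :=
  (stdGaussian n).map (fun x => ((hP.1.eigenvectorUnitary : Matrix (Fin n) (Fin n) ℝ) *
    diagonal (fun i => Real.sqrt (hP.1.eigenvalues i)) *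
    (star hP.1.eigenvectorUnitary : Matrix (Fin n) (Fin n) ℝ)) *ᵥ x)

open WithLp
open scoped MatrixOrder

section

variable {ι R : Type*} [Fintype ι] [DecidableEq ι] [CommRing R]

lemma mul_mul_transpose_eq_of_transpose_mul_inv_mul_eq {T₁ T₂ P₁ P₂ : Matrix ι ι R}
    (hT₂ : IsUnit T₂.det) (hP₁ : IsUnit P₁.det) (hP₂ : IsUnit P₂.det)
    (hP₁s : P₁.IsSymm) (hP₂s : P₂.IsSymm) (heq : T₁ᵀ * P₁⁻¹ * T₁ = T₂ᵀ * P₂⁻¹ * T₂) :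
    (P₂ * (T₂ᵀ)⁻¹ * T₁ᵀ * P₁⁻¹) * P₁ * (P₂ * (T₂ᵀ)⁻¹ * T₁ᵀ * P₁⁻¹)ᵀ = P₂ := by
  have hT₂t : IsUnit T₂ᵀ.det := by rwa [det_transpose]
  calc (P₂ * (T₂ᵀ)⁻¹ * T₁ᵀ * P₁⁻¹) * P₁ * (P₂ * (T₂ᵀ)⁻¹ * T₁ᵀ * P₁⁻¹)ᵀ
      = P₂ * (T₂ᵀ)⁻¹ * (T₁ᵀ * P₁⁻¹ * T₁) * T₂⁻¹ * P₂ := by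
        simp only [transpose_mul, transpose_nonsing_inv, transpose_transpose, hP₁s.eq, hP₂s.eq,
          Matrix.mul_assoc, nonsing_inv_mul_cancel_left _ _ hP₁]
    _ = P₂ := by
        rw [heq]
        simp only [Matrix.mul_assoc, nonsing_inv_mul_cancel_left _ _ hT₂t,
          mul_nonsing_inv_cancel_left _ _ hT₂, mul_nonsing_inv_cancel_left _ _ hP₂]
end

section

variable {ι : Type*} [Fintype ι] [DecidableEq ι]

lemma multivariateGaussian_map_toEuclideanCLM {S : Matrix ι ι ℝ} (hS : S.PosSemidef)
    (A : Matrix ι ι ℝ) :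
    (multivariateGaussian 0 S).map (toEuclideanCLM (𝕜 := ℝ) A)
      = multivariateGaussian 0 (A * S * Aᵀ) := by
  apply IsGaussian.ext
  · simp only [id_eq, integral_id_multivariateGaussian]
    rw [ContinuousLinearMap.integral_id_map IsGaussian.integrable_id,
      integral_id_multivariateGaussian, map_zero]
  · ext x y
    have hadj : (toEuclideanCLM (𝕜 := ℝ) A).adjoint = toEuclideanCLM (𝕜 := ℝ) Aᵀ := by
      rw [← ContinuousLinearMap.star_eq_adjoint, ← map_star, star_eq_conjTranspose,
        conjTranspose_eq_transpose_of_trivial]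
    have hASA : (A * S * Aᵀ).PosSemidef := by
      simpa [conjTranspose_eq_transpose_of_trivial] using hS.mul_mul_conjTranspose_same A
    rw [covarianceBilin_map IsGaussian.memLp_two_id, covarianceBilin_multivariateGaussian hS,
      covarianceBilin_multivariateGaussian hASA, hadj]
    simp only [ofLp_toEuclideanCLM, ← mulVec_mulVec, dotProduct_mulVec, mulVec_transpose]
end

lemma stdGaussian_eq_map_ofLp (n : ℕ) :
    stdGaussian n = (ProbabilityTheory.stdGaussian (EuclideanSpace ℝ (Fin n))).map ofLp := by
  rw [← map_pi_eq_stdGaussian, Measure.map_map (by fun_prop) (by fun_prop)]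
  exact Measure.map_id.symm

lemma centeredGaussian_eq_map_ofLp {n : ℕ} (P : Matrix (Fin n) (Fin n) ℝ) (hP : P.PosSemidef) :
    centeredGaussian P hP = (multivariateGaussian 0 P).map ofLp := by
  have hsqrt : CFC.sqrt P = (hP.1.eigenvectorUnitary : Matrix (Fin n) (Fin n) ℝ) *
      diagonal (fun i => Real.sqrt (hP.1.eigenvalues i)) *
      (star hP.1.eigenvectorUnitary : Matrix (Fin n) (Fin n) ℝ) := by
    rw [CFC.sqrt_eq_real_sqrt P hP.nonneg, cfcₙ_eq_cfc, hP.1.cfc_eq, IsHermitian.cfc,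
      Unitary.conjStarAlgAut_apply]
    rfl
  rw [centeredGaussian, multivariateGaussian, stdGaussian_eq_map_ofLp, hsqrt,
    Measure.map_map (by fun_prop) (by fun_prop), Measure.map_map (by fun_prop) (by fun_prop)]
  congr 1
  funext x
  simp [Matrix.mul_assoc]

theorem stmt_8_general {n : ℕ} (T₁ T₂ P₁ P₂ : Matrix (Fin n) (Fin n) ℝ)
    (hT₂ : IsUnit T₂.det)
    (hP₁ : P₁.PosDef) (hP₂ : P₂.PosDef)
    (heq : T₁ᵀ * P₁⁻¹ * T₁ = T₂ᵀ * P₂⁻¹ * T₂) :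
    (centeredGaussian P₁ hP₁.posSemidef).map
        (fun ξ => (P₂ * (T₂ᵀ)⁻¹ * T₁ᵀ * P₁⁻¹) *ᵥ ξ)
      = centeredGaussian P₂ hP₂.posSemidef := by
  set A := P₂ * (T₂ᵀ)⁻¹ * T₁ᵀ * P₁⁻¹
  have hcov : A * P₁ * Aᵀ = P₂ :=
    mul_mul_transpose_eq_of_transpose_mul_inv_mul_eq hT₂
      ((isUnit_iff_isUnit_det P₁).mp hP₁.isUnit) ((isUnit_iff_isUnit_det P₂).mp hP₂.isUnit)
      (isHermitian_iff_isSymm.mp hP₁.1) (isHermitian_iff_isSymm.mp hP₂.1) heq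
  calc (centeredGaussian P₁ hP₁.posSemidef).map (fun ξ => A *ᵥ ξ)
      = ((multivariateGaussian 0 P₁).map (toEuclideanCLM (𝕜 := ℝ) A)).map ofLp := by
        rw [centeredGaussian_eq_map_ofLp, Measure.map_map (by fun_prop) (by fun_prop),
          Measure.map_map (by fun_prop) (by fun_prop)]
        rfl
    _ = centeredGaussian P₂ hP₂.posSemidef := by
        rw [multivariateGaussian_map_toEuclideanCLM hP₁.posSemidef, hcov,
          centeredGaussian_eq_map_ofLp]

theorem stmt_8 {n : ℕ} (T₁ T₂ P₁ P₂ : Matrix (Fin n) (Fin n) ℝ)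
    (hT₁ : IsUnit T₁.det) (hT₂ : IsUnit T₂.det)
    (hP₁ : P₁.PosDef) (hP₂ : P₂.PosDef)
    (heq : T₁ᵀ * P₁⁻¹ * T₁ = T₂ᵀ * P₂⁻¹ * T₂) :
    (centeredGaussian P₁ hP₁.posSemidef).map
        (fun ξ => (P₂ * (T₂ᵀ)⁻¹ * T₁ᵀ * P₁⁻¹) *ᵥ ξ)
      = centeredGaussian P₂ hP₂.posSemidef :=
  stmt_8_general T₁ T₂ P₁ P₂ hT₂ hP₁ hP₂ heq
end

section
/- Let N ≥ 2 and let M₀, …, M_N be symmetric positive definite d×d real matrices and M_{k,k-1} (k = 1, …, N) arbitrary d×d real matrices. Suppose symmetric positive definite d×d matrices M^B₀, …, M^B_N and d×d matrices M^B_{k,k+1} (k = 0, …, N−1) satisfy: (M^B₀)⁻¹ = M₀⁻¹ + M_{1,0}ᵀ M₁⁻¹ M_{1,0}; M^B_{0,1} = M^B₀ M_{1,0}ᵀ M₁⁻¹; for k = 2, …, N: (M^B_{k-1})⁻¹ = M_{k-1}⁻¹ + M_{k,k-1}ᵀ M_k⁻¹ M_{k,k-1} − (M^B_{k-2,k-1})ᵀ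 (M^B_{k-2})⁻¹ M^B_{k-2,k-1} and M^B_{k-1,k} = M^B_{k-1} M_{k,k-1}ᵀ M_k⁻¹; and (M^B_N)⁻¹ = M_N⁻¹ − (M^B_{N-1,N})ᵀ (M^B_{N-1})⁻¹ M^B_{N-1,N}. Let T_F be the (N+1)×(N+1) block matrix with identity d×d blocks on the diagonal, blocks −M_{k,k-1} on the first block subdiagonal, and zero elsewhere; let P_F be the block-diagonal matrix with blocks M₀, …, M_N; let T_B be the block matrix with identity blocks on the diagonal, blocks −M^B_{k,k+1} on the first block superdiagonal, and zero elsewhere; let P_B be the block-diagonal matrix with blocks M^B₀, …, M^B_N. Then T_Bᵀ * P_B⁻¹ * T_B = T_Fᵀ * P_F⁻¹ * T_F. -/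
/-!
Write `T_F = 1 - L` and `T_B = 1 - U` with `L` block-subdiagonal and `U` block-superdiagonal.
Both `(1 - L)ᵀ P_F⁻¹ (1 - L)` and `(1 - U)ᵀ P_B⁻¹ (1 - U)` are block tridiagonal with explicit
blocks. The recursions for `(M^B_k)⁻¹` say exactly that the diagonal blocks agree, the formula
for `M^B_{k,k+1}` that the superdiagonal blocks `(M^B_k)⁻¹ M^B_{k,k+1}` and
`M_{k+1,k}ᵀ M_{k+1}⁻¹` agree, and the subdiagonal blocks are their transposes because the
covariances are symmetric.
-/

open Matrix

theorem Fin.sum_ite_val_eq {M : Type*} [AddCommMonoid M] {n : ℕ} (m : ℕ) (f : Fin n → M) :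
    ∑ k : Fin n, (if (k : ℕ) = m then f k else 0) = if h : m < n then f ⟨m, h⟩ else 0 := by
  split_ifs with h
  · rw [Fintype.sum_eq_single ⟨m, h⟩ fun k hk => if_neg fun h' => hk (Fin.ext h')]
    exact if_pos rfl
  · exact Finset.sum_eq_zero fun k _ => if_neg (by omega)

theorem one_sub_mul_mul_one_sub {S : Type*} [Ring S] (x d y : S) :
    (1 - x) * d * (1 - y) = d + x * d * y - x * d - d * y := by
  noncomm_ring

theorem add_ite_eq_add_ite_of_recursion {G : Type*} [AddCommGroup G] {N : ℕ} (hN : 1 ≤ N)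
    {P P' a b : ℕ → G} (h0 : P' 0 = P 0 + a 1)
    (hrec : ∀ k, 2 ≤ k → k ≤ N → P' (k - 1) = P (k - 1) + a k - b (k - 2))
    (hN' : P' N = P N - b (N - 1)) :
    ∀ k ≤ N, (P' k + if k = 0 then 0 else b (k - 1)) =
      P k + if k < N then a (k + 1) else 0 := by
  intro k hk
  rcases Nat.eq_zero_or_pos k with rfl | hk₀
  · simp [h0, show 0 < N by omega]
  rw [if_neg hk₀.ne']
  rcases hk.lt_or_eq with hkN | rfl
  · have hk' := hrec (k + 1) (by omega) (by omega)
    rw [Nat.add_sub_cancel, show k + 1 - 2 = k - 1 by omega] at hk'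
    rw [if_pos hkN, hk']
    abel
  · rw [if_neg (lt_irrefl _), hN']
    abel

namespace Matrix

variable {R : Type*} (n : ℕ)

def seqDiagonal [Zero R] (Q : ℕ → R) : Matrix (Fin (n + 1)) (Fin (n + 1)) R :=
  diagonal fun i => Q i

def seqSubdiagonal [Zero R] (A : ℕ → R) : Matrix (Fin (n + 1)) (Fin (n + 1)) R :=
  of fun i j => if (i : ℕ) = j + 1 then A i else 0

def seqSuperdiagonal [Zero R] (A : ℕ → R) : Matrix (Fin (n + 1)) (Fin (n + 1)) R :=
  of fun i j => if (j : ℕ) = i + 1 then A i else 0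

variable {n}

section Congr

variable [Zero R] {A B : ℕ → R}

theorem seqDiagonal_congr (h : ∀ i ≤ n, A i = B i) : seqDiagonal n A = seqDiagonal n B := by
  unfold seqDiagonal
  congr 1
  exact funext fun i => h i (by omega)

theorem seqSubdiagonal_congr (h : ∀ i, 1 ≤ i → i ≤ n → A i = B i) :
    seqSubdiagonal n A = seqSubdiagonal n B := by
  ext i j
  simp only [seqSubdiagonal, of_apply]
  split_ifs
  · exact h i (by omega) (by omega)
  · rfl

theorem seqSuperdiagonal_congr (h : ∀ i < n, A i = B i) :
    seqSuperdiagonal n A = seqSuperdiagonal n B := by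
  ext i j
  simp only [seqSuperdiagonal, of_apply]
  split_ifs
  · exact h i (by omega)
  · rfl

end Congr

theorem seqDiagonal_add [AddZeroClass R] (A B : ℕ → R) :
    seqDiagonal n A + seqDiagonal n B = seqDiagonal n fun i => A i + B i :=
  diagonal_add _ _

theorem one_sub_seqSubdiagonal_apply [AddGroupWithOne R] (A : ℕ → R) (i j : Fin (n + 1)) :
    (1 - seqSubdiagonal n A) i j =
      if (i : ℕ) = j then 1 else if (i : ℕ) = j + 1 then -A i else 0 := by
  simp only [sub_apply, one_apply, seqSubdiagonal, of_apply, Fin.ext_iff]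
  split_ifs <;> first | omega | simp

theorem one_sub_seqSuperdiagonal_apply [AddGroupWithOne R] (A : ℕ → R) (i j : Fin (n + 1)) :
    (1 - seqSuperdiagonal n A) i j =
      if (i : ℕ) = j then 1 else if (j : ℕ) = i + 1 then -A i else 0 := by
  simp only [sub_apply, one_apply, seqSuperdiagonal, of_apply, Fin.ext_iff]
  split_ifs <;> first | omega | simp

section Mul

variable [NonUnitalNonAssocSemiring R] (A B Q : ℕ → R)

theorem seqDiagonal_mul_seqDiagonal :
    seqDiagonal n A * seqDiagonal n B = seqDiagonal n fun i => A i * B i :=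
  diagonal_mul_diagonal _ _

theorem seqDiagonal_mul_seqSubdiagonal :
    seqDiagonal n Q * seqSubdiagonal n A = seqSubdiagonal n fun i => Q i * A i := by
  ext i j
  simp [seqDiagonal, seqSubdiagonal, diagonal_mul]

theorem seqSubdiagonal_mul_seqDiagonal :
    seqSubdiagonal n A * seqDiagonal n Q = seqSubdiagonal n fun i => A i * Q (i - 1) := by
  ext i j
  simp only [seqDiagonal, seqSubdiagonal, mul_diagonal, of_apply, ite_mul, zero_mul]
  split_ifs with h
  · rw [show (j : ℕ) = i - 1 by omega]
  · rfl

theorem seqDiagonal_mul_seqSuperdiagonal :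
    seqDiagonal n Q * seqSuperdiagonal n A = seqSuperdiagonal n fun i => Q i * A i := by
  ext i j
  simp [seqDiagonal, seqSuperdiagonal, diagonal_mul]

theorem seqSuperdiagonal_mul_seqDiagonal :
    seqSuperdiagonal n A * seqDiagonal n Q = seqSuperdiagonal n fun i => A i * Q (i + 1) := by
  ext i j
  simp only [seqDiagonal, seqSuperdiagonal, mul_diagonal, of_apply, ite_mul, zero_mul]
  split_ifs with h
  · rw [h]
  · rfl

theorem seqSuperdiagonal_mul_seqSubdiagonal :
    seqSuperdiagonal n A * seqSubdiagonal n B =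
      seqDiagonal n fun i => if i < n then A i * B (i + 1) else 0 := by
  ext i j
  simp only [seqDiagonal, seqSuperdiagonal, seqSubdiagonal, mul_apply, of_apply, ite_mul,
    mul_ite, zero_mul, mul_zero, Fin.sum_ite_val_eq, diagonal_apply, Fin.ext_iff]
  split_ifs <;> first | rfl | omega | rw [show (j : ℕ) = i by omega]

theorem seqSubdiagonal_mul_seqSuperdiagonal :
    seqSubdiagonal n A * seqSuperdiagonal n B =
      seqDiagonal n fun i => if i = 0 then 0 else A i * B (i - 1) := by
  ext i j
  simp only [seqDiagonal, seqSuperdiagonal, seqSubdiagonal, mul_apply, of_apply, ite_mul,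
    mul_ite, zero_mul, mul_zero, diagonal_apply, Fin.ext_iff]
  rw [Finset.sum_eq_single ⟨(i : ℕ) - 1, by omega⟩ (fun k _ hk => by
    split_ifs <;> first | rfl | exact absurd (Fin.ext (by simp only; omega)) hk) (by simp)]
  simp only
  split_ifs <;> first | rfl | omega

end Mul

section Star

theorem conjTranspose_seqSubdiagonal [AddMonoid R] [StarAddMonoid R] (A : ℕ → R) :
    (seqSubdiagonal n A)ᴴ = seqSuperdiagonal n fun i => star (A (i + 1)) := by
  ext i j
  simp only [seqSubdiagonal, seqSuperdiagonal, conjTranspose_apply, of_apply]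
  split_ifs with h
  · rw [h]
  · exact star_zero R

theorem conjTranspose_seqSuperdiagonal [AddMonoid R] [StarAddMonoid R] (A : ℕ → R) :
    (seqSuperdiagonal n A)ᴴ = seqSubdiagonal n fun i => star (A (i - 1)) := by
  ext i j
  simp only [seqSubdiagonal, seqSuperdiagonal, conjTranspose_apply, of_apply]
  split_ifs with h
  · rw [show (j : ℕ) = i - 1 by omega]
  · exact star_zero R

variable [Ring R] [StarRing R]

theorem conjTranspose_mul_seqDiagonal_mul_one_sub_seqSubdiagonal (A Q : ℕ → R) :
    (1 - seqSubdiagonal n A)ᴴ * seqDiagonal n Q * (1 - seqSubdiagonal n A) =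
      seqDiagonal n (fun i => Q i + if i < n then star (A (i + 1)) * Q (i + 1) * A (i + 1) else 0)
        - seqSuperdiagonal n (fun i => star (A (i + 1)) * Q (i + 1))
        - seqSubdiagonal n (fun i => Q i * A i) := by
  rw [conjTranspose_sub, conjTranspose_one, conjTranspose_seqSubdiagonal, one_sub_mul_mul_one_sub,
    seqSuperdiagonal_mul_seqDiagonal, seqSuperdiagonal_mul_seqSubdiagonal,
    seqDiagonal_mul_seqSubdiagonal, seqDiagonal_add]

theorem conjTranspose_mul_seqDiagonal_mul_one_sub_seqSuperdiagonal (B Q : ℕ → R) :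
    (1 - seqSuperdiagonal n B)ᴴ * seqDiagonal n Q * (1 - seqSuperdiagonal n B) =
      seqDiagonal n (fun i => Q i + if i = 0 then 0 else star (B (i - 1)) * Q (i - 1) * B (i - 1))
        - seqSubdiagonal n (fun i => star (B (i - 1)) * Q (i - 1))
        - seqSuperdiagonal n (fun i => Q i * B i) := by
  rw [conjTranspose_sub, conjTranspose_one, conjTranspose_seqSuperdiagonal,
    one_sub_mul_mul_one_sub, seqSubdiagonal_mul_seqDiagonal, seqSubdiagonal_mul_seqSuperdiagonal,
    seqDiagonal_mul_seqSuperdiagonal, seqDiagonal_add]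

theorem conjTranspose_mul_seqDiagonal_mul_one_sub_seqSuperdiagonal_eq {A B Q Q' : ℕ → R}
    (hQ : ∀ i ≤ n, IsSelfAdjoint (Q i)) (hQ' : ∀ i ≤ n, IsSelfAdjoint (Q' i))
    (hdiag : ∀ i ≤ n,
      (Q' i + if i = 0 then 0 else star (B (i - 1)) * Q' (i - 1) * B (i - 1)) =
        Q i + if i < n then star (A (i + 1)) * Q (i + 1) * A (i + 1) else 0)
    (hoffdiag : ∀ i < n, Q' i * B i = star (A (i + 1)) * Q (i + 1)) :
    (1 - seqSuperdiagonal n B)ᴴ * seqDiagonal n Q' * (1 - seqSuperdiagonal n B) =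
      (1 - seqSubdiagonal n A)ᴴ * seqDiagonal n Q * (1 - seqSubdiagonal n A) := by
  have hoffdiag' : ∀ i, 1 ≤ i → i ≤ n → star (B (i - 1)) * Q' (i - 1) = Q i * A i := by
    intro i hi₁ hi
    have h := congrArg star (hoffdiag (i - 1) (by omega))
    rwa [star_mul, star_mul, star_star, (hQ' _ (by omega)).star_eq, Nat.sub_add_cancel hi₁,
      (hQ i hi).star_eq] at h
  rw [conjTranspose_mul_seqDiagonal_mul_one_sub_seqSubdiagonal,
    conjTranspose_mul_seqDiagonal_mul_one_sub_seqSuperdiagonal, seqDiagonal_congr hdiag,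
    seqSubdiagonal_congr hoffdiag', seqSuperdiagonal_congr hoffdiag, sub_right_comm]

end Star

section Blocks

variable {m α : Type*} [Fintype m]

theorem transpose_compRingEquiv {ι : Type*} [Fintype ι] [AddCommMonoid α] [Mul α] [Star α]
    [TrivialStar α] (X : Matrix ι ι (Matrix m m α)) :
    (compRingEquiv ι m α X)ᵀ = compRingEquiv ι m α Xᴴ := by
  ext
  simp [conjTranspose_apply]

theorem compRingEquiv_seqDiagonal [AddCommMonoid α] [Mul α] (Q : ℕ → Matrix m m α) :
    compRingEquiv (Fin (n + 1)) m α (seqDiagonal n Q) =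
      of fun p q => if (p.1 : ℕ) = (q.1 : ℕ) then Q (p.1 : ℕ) p.2 q.2 else 0 := by
  ext ⟨i, a⟩ ⟨j, b⟩
  simp only [compRingEquiv_apply, comp_apply, seqDiagonal, diagonal_apply, of_apply,
    Fin.ext_iff]
  split_ifs <;> rfl

variable [DecidableEq m] [CommRing α]

theorem compRingEquiv_one_sub_seqSubdiagonal (A : ℕ → Matrix m m α) :
    compRingEquiv (Fin (n + 1)) m α (1 - seqSubdiagonal n A) = of fun p q =>
      if (p.1 : ℕ) = (q.1 : ℕ) then (1 : Matrix m m α) p.2 q.2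
      else if (p.1 : ℕ) = (q.1 : ℕ) + 1 then (-A (p.1 : ℕ)) p.2 q.2
      else 0 := by
  ext ⟨i, a⟩ ⟨j, b⟩
  simp only [compRingEquiv_apply, comp_apply, one_sub_seqSubdiagonal_apply, of_apply]
  split_ifs <;> rfl

theorem compRingEquiv_one_sub_seqSuperdiagonal (A : ℕ → Matrix m m α) :
    compRingEquiv (Fin (n + 1)) m α (1 - seqSuperdiagonal n A) = of fun p q =>
      if (p.1 : ℕ) = (q.1 : ℕ) then (1 : Matrix m m α) p.2 q.2
      else if (q.1 : ℕ) = (p.1 : ℕ) + 1 then (-A (p.1 : ℕ)) p.2 q.2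
      else 0 := by
  ext ⟨i, a⟩ ⟨j, b⟩
  simp only [compRingEquiv_apply, comp_apply, one_sub_seqSuperdiagonal_apply, of_apply]
  split_ifs <;> rfl

theorem inv_compRingEquiv_seqDiagonal {Q : ℕ → Matrix m m α}
    (hQ : ∀ i ≤ n, IsUnit (Q i).det) :
    (compRingEquiv (Fin (n + 1)) m α (seqDiagonal n Q))⁻¹ =
      compRingEquiv (Fin (n + 1)) m α (seqDiagonal n fun i => (Q i)⁻¹) := by
  refine inv_eq_right_inv ?_
  rw [← map_mul, seqDiagonal_mul_seqDiagonal,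
    seqDiagonal_congr fun i hi => mul_nonsing_inv _ (hQ i hi)]
  exact (congrArg _ diagonal_one).trans (map_one _)

theorem inv_mul_eq_transpose_mul_inv_of_recursion {N : ℕ} {M Mt MB MBt : ℕ → Matrix m m α}
    (hMB : ∀ k < N, IsUnit (MB k).det) (h0' : MBt 0 = MB 0 * (Mt 1)ᵀ * (M 1)⁻¹)
    (hrec' : ∀ k, 2 ≤ k → k ≤ N → MBt (k - 1) = MB (k - 1) * (Mt k)ᵀ * (M k)⁻¹) :
    ∀ k < N, (MB k)⁻¹ * MBt k = (Mt (k + 1))ᵀ * (M (k + 1))⁻¹ := by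
  intro k hk
  have hMBt : MBt k = MB k * (Mt (k + 1))ᵀ * (M (k + 1))⁻¹ := by
    rcases k with _ | k
    · exact h0'
    · simpa using hrec' (k + 2) (by omega) (by omega)
  rw [hMBt, Matrix.mul_assoc, nonsing_inv_mul_cancel_left _ _ (hMB k hk)]

end Blocks

end Matrix

theorem stmt_9 {N d : ℕ} (hN : 2 ≤ N)
    -- forward parameters: covariances `M k` (k = 0, …, N) and transitions `Mt k = M_{k,k-1}`
    (M Mt : ℕ → Matrix (Fin d) (Fin d) ℝ)
    (hM : ∀ k ≤ N, (M k).PosDef)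
    -- backward parameters: covariances `MB k` (k = 0, …, N) and transitions `MBt k = M^B_{k,k+1}`
    (MB MBt : ℕ → Matrix (Fin d) (Fin d) ℝ)
    (hMB : ∀ k ≤ N, (MB k).PosDef)
    (h0 : (MB 0)⁻¹ = (M 0)⁻¹ + (Mt 1)ᵀ * (M 1)⁻¹ * Mt 1)
    (h0' : MBt 0 = MB 0 * (Mt 1)ᵀ * (M 1)⁻¹)
    (hrec : ∀ k, 2 ≤ k → k ≤ N →
      (MB (k - 1))⁻¹ = (M (k - 1))⁻¹ + (Mt k)ᵀ * (M k)⁻¹ * Mt k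
        - (MBt (k - 2))ᵀ * (MB (k - 2))⁻¹ * MBt (k - 2))
    (hrec' : ∀ k, 2 ≤ k → k ≤ N →
      MBt (k - 1) = MB (k - 1) * (Mt k)ᵀ * (M k)⁻¹)
    (hN' : (MB N)⁻¹ = (M N)⁻¹ - (MBt (N - 1))ᵀ * (MB (N - 1))⁻¹ * MBt (N - 1)) :
    -- block model matrices
    let T_F : Matrix (Fin (N + 1) × Fin d) (Fin (N + 1) × Fin d) ℝ :=
      Matrix.of fun p q =>
        if (p.1 : ℕ) = (q.1 : ℕ) then (1 : Matrix (Fin d) (Fin d) ℝ) p.2 q.2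
        else if (p.1 : ℕ) = (q.1 : ℕ) + 1 then (-(Mt (p.1 : ℕ))) p.2 q.2
        else 0
    let P_F : Matrix (Fin (N + 1) × Fin d) (Fin (N + 1) × Fin d) ℝ :=
      Matrix.of fun p q =>
        if (p.1 : ℕ) = (q.1 : ℕ) then (M (p.1 : ℕ)) p.2 q.2 else 0
    let T_B : Matrix (Fin (N + 1) × Fin d) (Fin (N + 1) × Fin d) ℝ :=
      Matrix.of fun p q =>
        if (p.1 : ℕ) = (q.1 : ℕ) then (1 : Matrix (Fin d) (Fin d) ℝ) p.2 q.2
        else if (q.1 : ℕ) = (p.1 : ℕ) + 1 then (-(MBt (p.1 : ℕ))) p.2 q.2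
        else 0
    let P_B : Matrix (Fin (N + 1) × Fin d) (Fin (N + 1) × Fin d) ℝ :=
      Matrix.of fun p q =>
        if (p.1 : ℕ) = (q.1 : ℕ) then (MB (p.1 : ℕ)) p.2 q.2 else 0
    T_Bᵀ * P_B⁻¹ * T_B = T_Fᵀ * P_F⁻¹ * T_F := by
  intro T_F P_F T_B P_B
  have hMdet : ∀ k ≤ N, IsUnit (M k).det :=
    fun k hk => (isUnit_iff_isUnit_det _).1 (hM k hk).isUnit
  have hMBdet : ∀ k ≤ N, IsUnit (MB k).det :=
    fun k hk => (isUnit_iff_isUnit_det _).1 (hMB k hk).isUnit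
  have hTF : T_F = compRingEquiv _ _ _ (1 - seqSubdiagonal N Mt) :=
    (compRingEquiv_one_sub_seqSubdiagonal Mt).symm
  have hTB : T_B = compRingEquiv _ _ _ (1 - seqSuperdiagonal N MBt) :=
    (compRingEquiv_one_sub_seqSuperdiagonal MBt).symm
  have hPF : P_F⁻¹ = compRingEquiv _ _ _ (seqDiagonal N fun k => (M k)⁻¹) := by
    rw [show P_F = _ from (compRingEquiv_seqDiagonal M).symm,
      inv_compRingEquiv_seqDiagonal hMdet]
  have hPB : P_B⁻¹ = compRingEquiv _ _ _ (seqDiagonal N fun k => (MB k)⁻¹) := by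
    rw [show P_B = _ from (compRingEquiv_seqDiagonal MB).symm,
      inv_compRingEquiv_seqDiagonal hMBdet]
  rw [hTF, hTB, hPF, hPB, transpose_compRingEquiv, transpose_compRingEquiv,
    ← map_mul, ← map_mul, ← map_mul, ← map_mul]
  refine congrArg _ (conjTranspose_mul_seqDiagonal_mul_one_sub_seqSuperdiagonal_eq
    (fun k hk => (hM k hk).inv.isHermitian) (fun k hk => (hMB k hk).inv.isHermitian) ?_ ?_) <;>
    simp only [star_eq_conjTranspose, conjTranspose_eq_transpose_of_trivial]
  · exact add_ite_eq_add_ite_of_recursion (by omega) (P := fun k => (M k)⁻¹)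
      (P' := fun k => (MB k)⁻¹) (a := fun k => (Mt k)ᵀ * (M k)⁻¹ * Mt k)
      (b := fun k => (MBt k)ᵀ * (MB k)⁻¹ * MBt k) h0 hrec hN'
  · exact inv_mul_eq_transpose_mul_inv_of_recursion (fun k hk => hMBdet k hk.le) h0' hrec'
end

section
/- Let N ≥ 2, let M₀, …, M_N be symmetric positive definite d×d real matrices, M_{k,k-1} (k = 1, …, N) d×d real matrices, and suppose symmetric positive definite M^B₀, …, M^B_N and matrices M^B_{k,k+1} (k = 0, …, N−1) satisfy the backward-parameter equations: (M^B₀)⁻¹ = M₀⁻¹ + M_{1,0}ᵀ M₁⁻¹ M_{1,0}; M^B_{0,1} = M^B₀ M_{1,0}ᵀ M₁⁻¹; for k = 2, …, N: (M^B_{k-1})⁻¹ = M_{k-1}⁻¹ + M_{k,k-1}ᵀ M_k⁻¹ M_{k,k-1} − (M^B_{k-2,k-1})ᵀ (M^B_{k-2})⁻¹ M^B_{k-2,k-1} and M^B_{k-1,k} = M^B_{k-1} M_{k,k-1}ᵀ M_k⁻¹; and (M^B_N)⁻¹ = M_N⁻¹ − (M^B_{N-1,N})ᵀ (M^B_{N-1})⁻¹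 M^B_{N-1,N}. Let vectors x_k, e^M_k ∈ ℝ^d satisfy the forward Markov model x₀ = e^M₀ and x_k = M_{k,k-1} x_{k-1} + e^M_k for k = 1, …, N, and define vectors e^{MB}_k ∈ ℝ^d by: (M^B₀)⁻¹ e^{MB}₀ = M₀⁻¹ e^M₀ − M_{1,0}ᵀ M₁⁻¹ e^M₁; (M^B_k)⁻¹ e^{MB}_k = (M^B_{k-1,k})ᵀ (M^B_{k-1})⁻¹ e^{MB}_{k-1} + M_k⁻¹ e^M_k − M_{k+1,k}ᵀ M_{k+1}⁻¹ e^M_{k+1} for k = 1, …, N−1; and (M^B_N)⁻¹ e^{MB}_N = (M^B_{N-1,N})ᵀ (M^B_{N-1})⁻¹ e^{MB}_{N-1} + M_N⁻¹ e^M_N. Then x_N = e^{MB}_N and x_k = M^B_{k,k+1} x_{k+1} + e^{MB}_k for all k = 0, …, N−1. -/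
/-!
The backward noises are defined precisely so that the backward residual
`r k = x k - M^B_{k,k+1} x (k+1) - e^{MB}_k` satisfies
`(M^B_k)⁻¹ r k = M_k⁻¹ M_{k,k-1} r (k-1)`:
substituting the forward model for `e^M_k` and `e^M_{k+1}` and the backward-parameter equations
for `(M^B_k)⁻¹`, everything cancels except this term. At the two ends the missing terms play the
role of `M_{0,-1} = 0` and `M_{N+1,N} = 0`. Hence all residuals vanish by induction, and the last
equation gives `(M^B_N)⁻¹ (x N - e^{MB}_N) = 0`.
-/

open Matrix

theorem backward_residual_step {n R : Type*} [Fintype n] [CommRing R]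
    (P A K T T' Q Q' : Matrix n n R) (xPrev x xNext e eNext eB eBPrev : n → R)
    (hK : P * Q' = K) (hP : P = A + K * T' - A * T * Q)
    (heB : P *ᵥ eB = (A * T) *ᵥ eBPrev + A *ᵥ e - K *ᵥ eNext)
    (hx : x = T *ᵥ xPrev + e) (hxNext : xNext = T' *ᵥ x + eNext) :
    P *ᵥ (x - Q' *ᵥ xNext - eB) = (A * T) *ᵥ (xPrev - Q *ᵥ x - eBPrev) := by
  obtain rfl : e = x - T *ᵥ xPrev := by rw [hx]; abel
  obtain rfl : eNext = xNext - T' *ᵥ x := by rw [hxNext]; abel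
  rw [mulVec_sub, mulVec_sub, heB, mulVec_mulVec, hK, hP]
  simp only [add_mulVec, sub_mulVec, mulVec_sub, mulVec_mulVec]
  abel

theorem eq_zero_of_mulVec_eq_mulVec_pred {n R : Type*} [Fintype n] [DecidableEq n] [CommRing R]
    {N : ℕ} (P G : ℕ → Matrix n n R) (r : ℕ → n → R) (hP : ∀ k < N, IsUnit (P k))
    (h0 : P 0 *ᵥ r 0 = 0) (hstep : ∀ k, k + 1 < N → P (k + 1) *ᵥ r (k + 1) = G k *ᵥ r k) :
    ∀ k < N, r k = 0 := by
  intro k hk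
  refine mulVec_injective_of_isUnit (hP k hk) ?_
  induction k with
  | zero => rw [h0, mulVec_zero]
  | succ k ih =>
    rw [hstep k hk, mulVec_injective_of_isUnit (hP k (by omega)) (ih (by omega)), mulVec_zero,
      mulVec_zero]

theorem inv_mul_eq_and_transpose_mul_inv_eq {n R : Type*} [Fintype n] [DecidableEq n]
    [CommRing R] {B M G T : Matrix n n R} (hB : B.IsSymm) (hBdet : IsUnit B.det)
    (hM : M.IsSymm) (hG : G = B * Tᵀ * M⁻¹) :
    B⁻¹ * G = Tᵀ * M⁻¹ ∧ Gᵀ * B⁻¹ = M⁻¹ * T := by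
  subst hG
  constructor
  · rw [mul_assoc, nonsing_inv_mul_cancel_left _ _ hBdet]
  · rw [transpose_mul, transpose_mul, hM.inv.eq, transpose_transpose, hB.eq, mul_assoc,
      mul_nonsing_inv_cancel_right _ _ hBdet]

theorem Matrix.PosDef.isSymm_of_real {n : Type*} [Fintype n] {A : Matrix n n ℝ}
    (hA : A.PosDef) : A.IsSymm :=
  isHermitian_iff_isSymm.1 hA.isHermitian

theorem stmt_10 {N d : ℕ} (hN : 2 ≤ N)
    -- forward parameters: covariances `M k` (k = 0, …, N) and transitions `Mt k = M_{k,k-1}`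
    (M Mt : ℕ → Matrix (Fin d) (Fin d) ℝ)
    (hM : ∀ k ≤ N, (M k).PosDef)
    -- backward parameters: covariances `MB k` (k = 0, …, N) and transitions `MBt k = M^B_{k,k+1}`
    (MB MBt : ℕ → Matrix (Fin d) (Fin d) ℝ)
    (hMB : ∀ k ≤ N, (MB k).PosDef)
    (h0 : (MB 0)⁻¹ = (M 0)⁻¹ + (Mt 1)ᵀ * (M 1)⁻¹ * Mt 1)
    (h0' : MBt 0 = MB 0 * (Mt 1)ᵀ * (M 1)⁻¹)
    (hrec : ∀ k, 2 ≤ k → k ≤ N →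
      (MB (k - 1))⁻¹ = (M (k - 1))⁻¹ + (Mt k)ᵀ * (M k)⁻¹ * Mt k
        - (MBt (k - 2))ᵀ * (MB (k - 2))⁻¹ * MBt (k - 2))
    (hrec' : ∀ k, 2 ≤ k → k ≤ N →
      MBt (k - 1) = MB (k - 1) * (Mt k)ᵀ * (M k)⁻¹)
    (hN' : (MB N)⁻¹ = (M N)⁻¹ - (MBt (N - 1))ᵀ * (MB (N - 1))⁻¹ * MBt (N - 1))
    -- sample paths: states `x k`, forward noises/initial value `e k`,
    -- backward noises/final value `eB k`
    (x e eB : ℕ → Fin d → ℝ)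
    -- the forward Markov model
    (hx0 : x 0 = e 0)
    (hxk : ∀ k, 1 ≤ k → k ≤ N → x k = Mt k *ᵥ x (k - 1) + e k)
    -- the correspondence defining the backward noises and final value
    (he0 : (MB 0)⁻¹ *ᵥ eB 0 = (M 0)⁻¹ *ᵥ e 0 - ((Mt 1)ᵀ * (M 1)⁻¹) *ᵥ e 1)
    (hek : ∀ k, 1 ≤ k → k ≤ N - 1 →
      (MB k)⁻¹ *ᵥ eB k = ((MBt (k - 1))ᵀ * (MB (k - 1))⁻¹) *ᵥ eB (k - 1)
        + (M k)⁻¹ *ᵥ e k - ((Mt (k + 1))ᵀ * (M (k + 1))⁻¹) *ᵥ e (k + 1))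
    (heN : (MB N)⁻¹ *ᵥ eB N = ((MBt (N - 1))ᵀ * (MB (N - 1))⁻¹) *ᵥ eB (N - 1)
        + (M N)⁻¹ *ᵥ e N) :
    -- the backward Markov model holds for the same sample path
    x N = eB N ∧ ∀ k < N, x k = MBt k *ᵥ x (k + 1) + eB k := by
  have hgain : ∀ k < N, (MB k)⁻¹ * MBt k = (Mt (k + 1))ᵀ * (M (k + 1))⁻¹ ∧
      (MBt k)ᵀ * (MB k)⁻¹ = (M (k + 1))⁻¹ * Mt (k + 1) := by
    intro k hk
    refine inv_mul_eq_and_transpose_mul_inv_eq (hMB k hk.le).isSymm_of_real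
      ((isUnit_iff_isUnit_det _).1 (hMB k hk.le).isUnit) (hM (k + 1) hk).isSymm_of_real ?_
    cases k with
    | zero => exact h0'
    | succ k => simpa using hrec' (k + 2) (by omega) (by omega)
  have hres : ∀ k < N, x k - MBt k *ᵥ x (k + 1) - eB k = 0 := by
    refine eq_zero_of_mulVec_eq_mulVec_pred (fun k ↦ (MB k)⁻¹)
      (fun k ↦ (M (k + 1))⁻¹ * Mt (k + 1)) _ (fun k hk ↦ (hMB k hk.le).inv.isUnit) ?_
      (fun k hk ↦ ?_)
    · simpa using backward_residual_step (MB 0)⁻¹ (M 0)⁻¹ _ 0 (Mt 1) 0 (MBt 0) 0 (x 0) (x 1)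
        (e 0) (e 1) (eB 0) 0 (hgain 0 (by omega)).1 (by simpa using h0) (by simpa using he0)
        (by simpa using hx0) (hxk 1 le_rfl (by omega))
    · refine backward_residual_step _ _ _ _ _ _ _ _ _ _ _ (e (k + 2)) _ _ (hgain (k + 1) hk).1
        ?_ ?_ (hxk (k + 1) (by omega) (by omega)) (hxk (k + 2) (by omega) (by omega))
      · simpa [(hgain k (by omega)).2] using hrec (k + 2) (by omega) (by omega)
      · simpa [(hgain k (by omega)).2] using hek (k + 1) (by omega) (by omega)
  refine ⟨?_, fun k hk ↦ by simpa [sub_sub, sub_eq_zero, add_comm] using hres k hk⟩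
  obtain ⟨n, rfl⟩ : ∃ n, N = n + 1 := ⟨N - 1, by omega⟩
  simp only [Nat.add_sub_cancel] at hN' heN
  have hlast := backward_residual_step (MB (n + 1))⁻¹ (M (n + 1))⁻¹ 0 (Mt (n + 1)) 0 (MBt n) 0
    (x n) (x (n + 1)) 0 (e (n + 1)) 0 (eB (n + 1)) (eB n) (mul_zero _)
    (by simpa [(hgain n (by omega)).2] using hN') (by simpa [(hgain n (by omega)).2] using heN)
    (hxk (n + 1) (by omega) le_rfl) (by simp)
  simp only [hres n (by omega), mulVec_zero, sub_zero] at hlast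
  exact sub_eq_zero.1 (mulVec_injective_of_isUnit (hMB _ le_rfl).inv.isUnit
    (by rw [hlast, mulVec_zero]))
end

section
/- Let N ≥ 2, let M₀, …, M_N be symmetric positive definite d×d real matrices and M_{k,k-1} (k = 1, …, N) arbitrary d×d real matrices. Then there exist unique symmetric positive definite d×d matrices M^B₀, …, M^B_N and unique d×d matrices M^B_{k,k+1} (k = 0, …, N−1) satisfying: (M^B₀)⁻¹ = M₀⁻¹ + M_{1,0}ᵀ M₁⁻¹ M_{1,0}; M^B_{0,1} = M^B₀ M_{1,0}ᵀ M₁⁻¹; for k = 2, …, N: (M^B_{k-1})⁻¹ = M_{k-1}⁻¹ + M_{k,k-1}ᵀ M_k⁻¹ M_{k,k-1} − (M^B_{k-2,k-1})ᵀ (M^B_{k-2})⁻¹ M^B_{k-2,k-1} and M^B_{k-1,k} = M^B_{k-1} M_{k,k-1}ᵀ M_k⁻¹; and (M^B_N)⁻¹ = M_N⁻¹ − (M^B_{N-1,N})ᵀ (M^B_{N-1})⁻¹ M^B_{N-1,N}. -/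
open Matrix

/-- `MB k` (k = 0, …, N) and `MBt k = M^B_{k,k+1}` (k = 0, …, N−1) are backward Markov
parameters for the forward parameters `M k` (covariances) and `Mt k = M_{k,k-1}`
(transitions): the `MB k` are symmetric positive definite and the backward-parameter
recursions hold. -/
def IsBackwardMarkovParams (N : ℕ) {d : ℕ}
    (M Mt MB MBt : ℕ → Matrix (Fin d) (Fin d) ℝ) : Prop :=
  (∀ k ≤ N, (MB k).PosDef) ∧
  (MB 0)⁻¹ = (M 0)⁻¹ + (Mt 1)ᵀ * (M 1)⁻¹ * Mt 1 ∧
  MBt 0 = MB 0 * (Mt 1)ᵀ * (M 1)⁻¹ ∧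
  (∀ k, 2 ≤ k → k ≤ N →
    (MB (k - 1))⁻¹ = (M (k - 1))⁻¹ + (Mt k)ᵀ * (M k)⁻¹ * Mt k
        - (MBt (k - 2))ᵀ * (MB (k - 2))⁻¹ * MBt (k - 2) ∧
    MBt (k - 1) = MB (k - 1) * (Mt k)ᵀ * (M k)⁻¹) ∧
  (MB N)⁻¹ = (M N)⁻¹ - (MBt (N - 1))ᵀ * (MB (N - 1))⁻¹ * MBt (N - 1)

/-
Let `P k` be the covariance of `x k` in the forward model: `P 0 = M 0` and
`P (k+1) = M (k+1) + M_{k+1,k} P k M_{k+1,k}ᵀ`. The backward covariances are the conditional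
ones, with precisions `(M^B_k)⁻¹ = (P k)⁻¹ + M_{k+1,k}ᵀ (M (k+1))⁻¹ M_{k+1,k}` for `k < N` and
`M^B_N = P N`; they are positive definite because the `P k` are. By the Woodbury identity,
`(P (k+1))⁻¹ = (M (k+1))⁻¹ - (M^B_{k,k+1})ᵀ (M^B_k)⁻¹ M^B_{k,k+1}`, and this turns the
definition of `(M^B_{k+1})⁻¹` into the stated recursion. Uniqueness holds because each recursion
determines `(M^B_k)⁻¹`, hence `M^B_k`, from the parameters with smaller index.
-/

namespace Matrix

variable {n R : Type*} [Fintype n]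

lemma PosSemidef.transpose_mul_mul_same {m : Type*} [Finite m] [CommRing R] [PartialOrder R]
    [StarRing R] [TrivialStar R] {P : Matrix n n R} (hP : P.PosSemidef) (B : Matrix n m R) :
    (Bᵀ * P * B).PosSemidef := by
  simpa only [conjTranspose_eq_transpose_of_trivial] using hP.conjTranspose_mul_mul_same B

lemma transpose_mul_inv_mul_self_eq [DecidableEq n] [CommRing R] {B Q : Matrix n n R}
    (hB : IsUnit B.det) (hBsymm : B.IsSymm) (hQsymm : Q.IsSymm) (A : Matrix n n R) :
    (B * A * Q)ᵀ * B⁻¹ * (B * A * Q) = Q * Aᵀ * B * A * Q := by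
  rw [transpose_mul, transpose_mul, hBsymm.eq, hQsymm.eq]
  simp only [Matrix.mul_assoc, mul_nonsing_inv_cancel_left _ _ hB]

end Matrix

namespace BackwardMarkov

variable {d : ℕ}

/-- The inverse covariance `(P k)⁻¹` of `x k` in the forward model. -/
noncomputable def forwardInfo (M Mt : ℕ → Matrix (Fin d) (Fin d) ℝ) :
    ℕ → Matrix (Fin d) (Fin d) ℝ
  | 0 => (M 0)⁻¹
  | k + 1 => (M (k + 1) + Mt (k + 1) * (forwardInfo M Mt k)⁻¹ * (Mt (k + 1))ᵀ)⁻¹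

noncomputable def backwardInfo (M Mt : ℕ → Matrix (Fin d) (Fin d) ℝ) (k : ℕ) :
    Matrix (Fin d) (Fin d) ℝ :=
  forwardInfo M Mt k + (Mt (k + 1))ᵀ * (M (k + 1))⁻¹ * Mt (k + 1)

variable {N : ℕ} {M Mt : ℕ → Matrix (Fin d) (Fin d) ℝ}

lemma posDef_forwardInfo (hM : ∀ k ≤ N, (M k).PosDef) :
    ∀ k ≤ N, (forwardInfo M Mt k).PosDef
  | 0, h0 => (hM 0 h0).inv
  | k + 1, hk => by
    have hT := (posDef_forwardInfo hM k (by omega)).inv.posSemidef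
    simpa only [forwardInfo, transpose_transpose] using
      ((hM (k + 1) hk).add_posSemidef (hT.transpose_mul_mul_same (Mt (k + 1))ᵀ)).inv

lemma posDef_backwardInfo (hM : ∀ k ≤ N, (M k).PosDef) {k : ℕ} (hk : k < N) :
    (backwardInfo M Mt k).PosDef :=
  (posDef_forwardInfo hM k hk.le).add_posSemidef
    ((hM (k + 1) hk).inv.posSemidef.transpose_mul_mul_same _)

lemma forwardInfo_succ_eq_sub (hM : ∀ k ≤ N, (M k).PosDef) {k : ℕ} (hk : k < N) :
    forwardInfo M Mt (k + 1) = (M (k + 1))⁻¹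
      - (M (k + 1))⁻¹ * Mt (k + 1) * (backwardInfo M Mt k)⁻¹ * (Mt (k + 1))ᵀ * (M (k + 1))⁻¹ := by
  have hT := posDef_forwardInfo (Mt := Mt) hM k hk.le
  have hTinv : (forwardInfo M Mt k)⁻¹⁻¹ = forwardInfo M Mt k :=
    nonsing_inv_nonsing_inv _ hT.det_pos.ne'.isUnit
  have := add_mul_mul_inv_eq_sub (M (k + 1)) (Mt (k + 1)) (forwardInfo M Mt k)⁻¹ (Mt (k + 1))ᵀ
    (hM (k + 1) hk).isUnit hT.inv.isUnit (by rw [hTinv]; exact (posDef_backwardInfo hM hk).isUnit)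
  rwa [hTinv] at this

noncomputable def backwardCov (M Mt : ℕ → Matrix (Fin d) (Fin d) ℝ) (N k : ℕ) :
    Matrix (Fin d) (Fin d) ℝ :=
  if k < N then (backwardInfo M Mt k)⁻¹ else (forwardInfo M Mt N)⁻¹

noncomputable def backwardTransition (M Mt : ℕ → Matrix (Fin d) (Fin d) ℝ) (N k : ℕ) :
    Matrix (Fin d) (Fin d) ℝ :=
  backwardCov M Mt N k * (Mt (k + 1))ᵀ * (M (k + 1))⁻¹

lemma backwardCov_of_lt {k : ℕ} (hk : k < N) :
    backwardCov M Mt N k = (backwardInfo M Mt k)⁻¹ :=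
  if_pos hk

lemma inv_backwardCov_of_lt (hM : ∀ k ≤ N, (M k).PosDef) {k : ℕ} (hk : k < N) :
    (backwardCov M Mt N k)⁻¹ = backwardInfo M Mt k := by
  rw [backwardCov_of_lt hk,
    nonsing_inv_nonsing_inv _ (posDef_backwardInfo hM hk).det_pos.ne'.isUnit]

lemma inv_backwardCov_self (hM : ∀ k ≤ N, (M k).PosDef) :
    (backwardCov M Mt N N)⁻¹ = forwardInfo M Mt N := by
  rw [backwardCov, if_neg (lt_irrefl N),
    nonsing_inv_nonsing_inv _ (posDef_forwardInfo hM N le_rfl).det_pos.ne'.isUnit]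

lemma posDef_backwardCov (hM : ∀ k ≤ N, (M k).PosDef) :
    ∀ k ≤ N, (backwardCov M Mt N k).PosDef := by
  intro k hk
  rcases hk.lt_or_eq with hk | rfl
  · rw [backwardCov_of_lt hk]
    exact (posDef_backwardInfo hM hk).inv
  · rw [backwardCov, if_neg (lt_irrefl k)]
    exact (posDef_forwardInfo hM k le_rfl).inv

lemma forwardInfo_succ_eq (hM : ∀ k ≤ N, (M k).PosDef) {k : ℕ} (hk : k < N) :
    forwardInfo M Mt (k + 1) = (M (k + 1))⁻¹ - (backwardTransition M Mt N k)ᵀ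
      * (backwardCov M Mt N k)⁻¹ * backwardTransition M Mt N k := by
  have hB := (posDef_backwardInfo (Mt := Mt) hM hk).inv
  rw [backwardTransition, backwardCov_of_lt hk,
    transpose_mul_inv_mul_self_eq hB.det_pos.ne'.isUnit (isHermitian_iff_isSymm.mp hB.isHermitian)
    (isHermitian_iff_isSymm.mp (hM (k + 1) hk).inv.isHermitian), transpose_transpose,
    forwardInfo_succ_eq_sub hM hk]

theorem isBackwardMarkovParams_backwardCov (hN : 0 < N) (hM : ∀ k ≤ N, (M k).PosDef) :
    IsBackwardMarkovParams N M Mt (backwardCov M Mt N) (backwardTransition M Mt N) := by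
  refine ⟨posDef_backwardCov hM, inv_backwardCov_of_lt hM hN, rfl, ?_, ?_⟩
  · intro k hk2 hkN
    obtain ⟨j, rfl⟩ : ∃ j, k = j + 2 := ⟨k - 2, by omega⟩
    refine ⟨?_, rfl⟩
    simp only [Nat.reduceSubDiff, Nat.add_sub_cancel]
    rw [inv_backwardCov_of_lt hM (by omega), backwardInfo, forwardInfo_succ_eq hM (by omega)]
    abel
  · obtain ⟨m, rfl⟩ : ∃ m, N = m + 1 := ⟨N - 1, by omega⟩
    rw [inv_backwardCov_self hM, forwardInfo_succ_eq hM (Nat.lt_succ_self m)]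
    rfl

end BackwardMarkov

namespace IsBackwardMarkovParams

variable {N d : ℕ} {M Mt MB MBt MB' MBt' : ℕ → Matrix (Fin d) (Fin d) ℝ}

lemma inv_succ (hP : IsBackwardMarkovParams N M Mt MB MBt) {j : ℕ} (hj : j + 2 ≤ N) :
    (MB (j + 1))⁻¹ = (M (j + 1))⁻¹ + (Mt (j + 2))ᵀ * (M (j + 2))⁻¹ * Mt (j + 2)
      - (MBt j)ᵀ * (MB j)⁻¹ * MBt j :=
  (hP.2.2.2.1 (j + 2) (by omega) hj).1

lemma transition_eq (hP : IsBackwardMarkovParams N M Mt MB MBt) {j : ℕ} (hj : j < N) :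
    MBt j = MB j * (Mt (j + 1))ᵀ * (M (j + 1))⁻¹ := by
  cases j with
  | zero => exact hP.2.2.1
  | succ i => exact (hP.2.2.2.1 (i + 2) (by omega) hj).2

lemma inv_last {j : ℕ} (hP : IsBackwardMarkovParams (j + 1) M Mt MB MBt) :
    (MB (j + 1))⁻¹ = (M (j + 1))⁻¹ - (MBt j)ᵀ * (MB j)⁻¹ * MBt j :=
  hP.2.2.2.2

theorem unique (hP : IsBackwardMarkovParams N M Mt MB MBt)
    (hP' : IsBackwardMarkovParams N M Mt MB' MBt') :
    (∀ k ≤ N, MB k = MB' k) ∧ (∀ k < N, MBt k = MBt' k) := by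
  have hMBt {k : ℕ} (hk : k < N) (h : MB k = MB' k) : MBt k = MBt' k := by
    rw [hP.transition_eq hk, hP'.transition_eq hk, h]
  have hMB : ∀ k ≤ N, MB k = MB' k := by
    intro k hk
    refine inv_inj ?_ (hP.1 k hk).det_pos.ne'.isUnit
    induction k with
    | zero => rw [hP.2.1, hP'.2.1]
    | succ j ih =>
      have hj : MB j = MB' j := inv_inj (ih (by omega)) (hP.1 j (by omega)).det_pos.ne'.isUnit
      have hjt := hMBt (by omega) hj
      rcases (by omega : j + 2 ≤ N ∨ N = j + 1) with h | rfl
      · rw [hP.inv_succ h, hP'.inv_succ h, hj, hjt]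
      · rw [hP.inv_last, hP'.inv_last, hj, hjt]
  exact ⟨hMB, fun k hk => hMBt hk (hMB k hk.le)⟩

end IsBackwardMarkovParams

open BackwardMarkov in
theorem stmt_11 {N d : ℕ} (hN : 2 ≤ N)
    (M Mt : ℕ → Matrix (Fin d) (Fin d) ℝ)
    (hM : ∀ k ≤ N, (M k).PosDef) :
    (∃ MB MBt : ℕ → Matrix (Fin d) (Fin d) ℝ,
        IsBackwardMarkovParams N M Mt MB MBt) ∧
    (∀ MB MBt MB' MBt' : ℕ → Matrix (Fin d) (Fin d) ℝ,
        IsBackwardMarkovParams N M Mt MB MBt →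
        IsBackwardMarkovParams N M Mt MB' MBt' →
        (∀ k ≤ N, MB k = MB' k) ∧ (∀ k < N, MBt k = MBt' k)) :=
  ⟨⟨_, _, isBackwardMarkovParams_backwardCov (by omega) hM⟩,
    fun _ _ _ _ hP hP' => hP.unique hP'⟩
end

section
/- Under the hypotheses relating forward Markov parameters (M_k positive definite, M_{k,k-1}) and backward Markov parameters (M^B_k positive definite, M^B_{k,k+1}) via the equations (M^B₀)⁻¹ = M₀⁻¹ + M_{1,0}ᵀ M₁⁻¹ M_{1,0}; M^B_{0,1} = M^B₀ M_{1,0}ᵀ M₁⁻¹; for k = 2, …, N: (M^B_{k-1})⁻¹ = M_{k-1}⁻¹ + M_{k,k-1}ᵀ M_k⁻¹ M_{k,k-1} − (M^B_{k-2,k-1})ᵀ (M^B_{k-2})⁻¹ M^B_{k-2,k-1}, M^B_{k-1,k} = M^B_{k-1} M_{k,k-1}ᵀ M_k⁻¹; and (M^B_N)⁻¹ = M_N⁻¹ − (M^B_{N-1,N})ᵀ (M^B_{N-1})⁻¹ M^B_{N-1,N}, let T_F, T_B be the block lower-bidiagonal and block upper-bidiagonal model matrices (identity diagonal blocks, subdiagonal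 blocks −M_{k,k-1}, superdiagonal blocks −M^B_{k,k+1}) and P_F, P_B the block-diagonal matrices with blocks M_k and M^B_k respectively. Then the matrix B := P_B * (T_Bᵀ)⁻¹ * T_Fᵀ * P_F⁻¹ satisfies B * P_F * Bᵀ = P_B. -/
/-!
Both Markov models describe the same Gaussian vector `x`, so they must have the same
information matrix: `T_Fᵀ P_F⁻¹ T_F = T_Bᵀ P_B⁻¹ T_B`. Both sides are block tridiagonal, and the
backward recursion for `M^B_k` and `M^B_{k,k+1}` is exactly the blockwise matching of their
diagonal and off-diagonal blocks. Granting this identity, `B P_F Bᵀ` collapses to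
`P_B (T_Bᵀ)⁻¹ (T_Bᵀ P_B⁻¹ T_B) T_B⁻¹ P_B = P_B`.
-/

open Matrix Finset

theorem Matrix.mul_mul_transpose_eq_of_gram_eq {ι K : Type*} [Fintype ι] [DecidableEq ι]
    [CommRing K] {TF PF TB PB : Matrix ι ι K} (hPF : IsUnit PF.det) (hPB : IsUnit PB.det)
    (hTB : IsUnit TB.det) (hPFsymm : PF.IsSymm) (hPBsymm : PB.IsSymm)
    (h : TFᵀ * PF⁻¹ * TF = TBᵀ * PB⁻¹ * TB) :
    PB * TBᵀ⁻¹ * TFᵀ * PF⁻¹ * PF * (PB * TBᵀ⁻¹ * TFᵀ * PF⁻¹)ᵀ = PB := by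
  have hTBT : IsUnit TBᵀ.det := by rwa [det_transpose]
  have hPFT : PF⁻¹ᵀ = PF⁻¹ := by rw [transpose_nonsing_inv, hPFsymm.eq]
  calc PB * TBᵀ⁻¹ * TFᵀ * PF⁻¹ * PF * (PB * TBᵀ⁻¹ * TFᵀ * PF⁻¹)ᵀ
      = PB * TBᵀ⁻¹ * (TFᵀ * PF⁻¹ * TF) * TB⁻¹ * PB := by
        simp only [transpose_mul, transpose_transpose, hPFT, hPBsymm.eq, ← transpose_nonsing_inv,
          nonsing_inv_mul_cancel_right (h := hPF), Matrix.mul_assoc]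
    _ = PB := by
        rw [h]
        simp only [Matrix.mul_assoc, nonsing_inv_mul_cancel_left (h := hTBT),
          mul_nonsing_inv_cancel_left (h := hTB), mul_nonsing_inv_cancel_left (h := hPB)]

namespace Matrix

variable {m R : Type*}

-- Blocks are indexed by `ℕ`; only the `(i, j)` blocks with `i, j ≤ n` enter the matrix.
def ofBlocks (n : ℕ) (F : ℕ → ℕ → Matrix m m R) :
    Matrix (Fin (n + 1) × m) (Fin (n + 1) × m) R :=
  comp _ _ _ _ _ (of fun i j : Fin (n + 1) => F i j)

theorem ofBlocks_apply (n : ℕ) (F : ℕ → ℕ → Matrix m m R) (p q : Fin (n + 1) × m) :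
    ofBlocks n F p q = F p.1 q.1 p.2 q.2 := rfl

theorem ofBlocks_congr {n : ℕ} {F G : ℕ → ℕ → Matrix m m R}
    (h : ∀ i ≤ n, ∀ j ≤ n, F i j = G i j) : ofBlocks n F = ofBlocks n G := by
  ext p q
  rw [ofBlocks_apply, ofBlocks_apply,
    h _ (Nat.lt_succ_iff.1 p.1.isLt) _ (Nat.lt_succ_iff.1 q.1.isLt)]

theorem ofBlocks_transpose (n : ℕ) (F : ℕ → ℕ → Matrix m m R) :
    (ofBlocks n F)ᵀ = ofBlocks n fun i j => (F j i)ᵀ := rfl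

variable [CommRing R]

def diagBlocks (a : ℕ → Matrix m m R) (i j : ℕ) : Matrix m m R := if i = j then a i else 0

def tridiagBlocks (D L U : ℕ → Matrix m m R) (i j : ℕ) : Matrix m m R :=
  if i = j then D i else if i = j + 1 then L i else if j = i + 1 then U i else 0

theorem ofBlocks_tridiagBlocks_congr {n : ℕ} {D L U D' L' U' : ℕ → Matrix m m R}
    (hD : ∀ i ≤ n, D i = D' i) (hL : ∀ i, 0 < i → i ≤ n → L i = L' i)
    (hU : ∀ i < n, U i = U' i) :
    ofBlocks n (tridiagBlocks D L U) = ofBlocks n (tridiagBlocks D' L' U') := by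
  refine ofBlocks_congr fun i hi j hj => ?_
  simp only [tridiagBlocks]
  split_ifs
  · exact hD i hi
  · exact hL i (by omega) hi
  · exact hU i (by omega)
  · rfl

theorem isSymm_ofBlocks_diagBlocks {n : ℕ} {a : ℕ → Matrix m m R} (ha : ∀ k ≤ n, (a k).IsSymm) :
    (ofBlocks n (diagBlocks a)).IsSymm := by
  rw [IsSymm, ofBlocks_transpose]
  refine ofBlocks_congr fun i _ j hj => ?_
  by_cases hij : j = i
  · subst hij; simp [diagBlocks, (ha j hj).eq]
  · simp [diagBlocks, hij, Ne.symm hij]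

theorem ofBlocks_one [DecidableEq m] (n : ℕ) : ofBlocks n (diagBlocks fun _ => (1 : Matrix m m R)) = 1 := by
  rw [ofBlocks, ← comp_one]
  refine congrArg _ (ext fun i j => ?_)
  simp [diagBlocks, one_apply, Fin.val_inj]

variable [Fintype m]

theorem ofBlocks_mul (n : ℕ) (F G : ℕ → ℕ → Matrix m m R) :
    ofBlocks n F * ofBlocks n G = ofBlocks n fun i j => ∑ k ∈ range (n + 1), F i k * G k j := by
  rw [ofBlocks, ofBlocks, ← compRingEquiv_apply, ← compRingEquiv_apply, ← map_mul, ofBlocks]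
  refine congrArg _ (ext fun i j => ?_)
  simp [mul_apply, Fin.sum_univ_eq_sum_range (fun k => F i k * G k j)]

theorem ofBlocks_mul_diagBlocks (n : ℕ) (F : ℕ → ℕ → Matrix m m R) (a : ℕ → Matrix m m R) :
    ofBlocks n F * ofBlocks n (diagBlocks a) = ofBlocks n fun i j => F i j * a j := by
  rw [ofBlocks_mul]
  refine ofBlocks_congr fun i _ j hj => ?_
  rw [sum_eq_single_of_mem j (mem_range_succ_iff.2 hj) fun k _ hk => by simp [diagBlocks, hk]]
  simp [diagBlocks]

variable [DecidableEq m]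

def lowerBidiagBlocks (A : ℕ → Matrix m m R) (i j : ℕ) : Matrix m m R :=
  if i = j then 1 else if i = j + 1 then -A i else 0

def upperBidiagBlocks (A : ℕ → Matrix m m R) (i j : ℕ) : Matrix m m R :=
  if i = j then 1 else if j = i + 1 then -A i else 0

theorem ofBlocks_diagBlocks_mul_inv {n : ℕ} {a : ℕ → Matrix m m R}
    (ha : ∀ k ≤ n, IsUnit (a k).det) :
    ofBlocks n (diagBlocks a) * ofBlocks n (diagBlocks fun k => (a k)⁻¹) = 1 := by
  rw [ofBlocks_mul_diagBlocks, ← ofBlocks_one]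
  refine ofBlocks_congr fun i hi j _ => ?_
  by_cases hij : i = j
  · subst hij; simp [diagBlocks, mul_nonsing_inv _ (ha i hi)]
  · simp [diagBlocks, hij]

theorem inv_ofBlocks_diagBlocks {n : ℕ} {a : ℕ → Matrix m m R} (ha : ∀ k ≤ n, IsUnit (a k).det) :
    (ofBlocks n (diagBlocks a))⁻¹ = ofBlocks n (diagBlocks fun k => (a k)⁻¹) :=
  inv_eq_right_inv (ofBlocks_diagBlocks_mul_inv ha)

theorem isUnit_det_ofBlocks_diagBlocks {n : ℕ} {a : ℕ → Matrix m m R}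
    (ha : ∀ k ≤ n, IsUnit (a k).det) : IsUnit (ofBlocks n (diagBlocks a)).det :=
  isUnit_det_of_right_inverse (ofBlocks_diagBlocks_mul_inv ha)

theorem det_ofBlocks_upperBidiagBlocks (n : ℕ) (A : ℕ → Matrix m m R) :
    (ofBlocks n (upperBidiagBlocks A)).det = 1 := by
  have htri : (ofBlocks n (upperBidiagBlocks A)).BlockTriangular Prod.fst := fun p q hqp => by
    have : (q.1 : ℕ) < p.1 := hqp
    simp only [ofBlocks_apply, upperBidiagBlocks]
    rw [if_neg (by omega), if_neg (by omega), zero_apply]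
  rw [htri.det]
  refine prod_eq_one fun a _ => ?_
  suffices (ofBlocks n (upperBidiagBlocks A)).toSquareBlock Prod.fst a = 1 by rw [this, det_one]
  ext ⟨⟨i, x⟩, rfl⟩ ⟨⟨j, y⟩, hj⟩
  obtain rfl : j = i := hj
  simp [toSquareBlock_def, ofBlocks_apply, upperBidiagBlocks, one_apply]

theorem lowerBidiagBlocks_gram (n : ℕ) (A Q : ℕ → Matrix m m R) :
    (ofBlocks n (lowerBidiagBlocks A))ᵀ * ofBlocks n (diagBlocks Q) *
        ofBlocks n (lowerBidiagBlocks A) =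
      ofBlocks n (tridiagBlocks
        (fun i => Q i + if i < n then (A (i + 1))ᵀ * Q (i + 1) * A (i + 1) else 0)
        (fun i => -(Q i * A i)) (fun i => -((A (i + 1))ᵀ * Q (i + 1)))) := by
  rw [ofBlocks_transpose, ofBlocks_mul_diagBlocks, ofBlocks_mul]
  refine ofBlocks_congr fun i hi j hj => ?_
  have hsupp : ∀ k, k ≠ i → k ≠ i + 1 →
      (lowerBidiagBlocks A k i)ᵀ * Q k * lowerBidiagBlocks A k j = 0 := by
    intro k h1 h2; simp [lowerBidiagBlocks, h1, h2]
  rcases lt_or_eq_of_le hi with hi | rfl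
  · rw [sum_eq_add_of_mem i (i + 1) (by simp; omega) (by simp; omega) (by omega)
      fun k _ hk => hsupp k hk.1 hk.2]
    simp only [lowerBidiagBlocks, tridiagBlocks]
    split_ifs <;> first | omega | simp
  · rw [sum_eq_single_of_mem i (by simp) fun k hk hki => hsupp k hki (by simp at hk; omega)]
    simp only [lowerBidiagBlocks, tridiagBlocks]
    split_ifs <;> first | omega | simp

theorem upperBidiagBlocks_gram (n : ℕ) (A Q : ℕ → Matrix m m R) :
    (ofBlocks n (upperBidiagBlocks A))ᵀ * ofBlocks n (diagBlocks Q) *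
        ofBlocks n (upperBidiagBlocks A) =
      ofBlocks n (tridiagBlocks
        (fun i => Q i + if i = 0 then 0 else (A (i - 1))ᵀ * Q (i - 1) * A (i - 1))
        (fun i => -((A (i - 1))ᵀ * Q (i - 1))) (fun i => -(Q i * A i))) := by
  rw [ofBlocks_transpose, ofBlocks_mul_diagBlocks, ofBlocks_mul]
  refine ofBlocks_congr fun i _ j _ => ?_
  have hsupp : ∀ k, k ≠ i → k + 1 ≠ i →
      (upperBidiagBlocks A k i)ᵀ * Q k * upperBidiagBlocks A k j = 0 := by
    intro k h1 h2; simp [upperBidiagBlocks, h1, Ne.symm h2]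
  rcases Nat.eq_zero_or_pos i with rfl | hi0
  · rw [sum_eq_single_of_mem 0 (by simp) fun k _ hk => hsupp k hk (by omega)]
    simp only [upperBidiagBlocks, tridiagBlocks]
    split_ifs <;> first | omega | contradiction | simp
  · rw [sum_eq_add_of_mem (i - 1) i (by simp; omega) (by simp; omega) (by omega)
      fun k _ hk => hsupp k hk.2 (by omega)]
    simp only [upperBidiagBlocks, tridiagBlocks]
    split_ifs <;> first | omega | simp [add_comm]

end Matrix

section BackwardMarkov

variable {m R : Type*} [Fintype m] [DecidableEq m] [CommRing R] {N : ℕ}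
  {M Mt MB MBt : ℕ → Matrix m m R}

theorem backward_transition_eq (h0' : MBt 0 = MB 0 * (Mt 1)ᵀ * (M 1)⁻¹)
    (hrec' : ∀ k, 2 ≤ k → k ≤ N → MBt (k - 1) = MB (k - 1) * (Mt k)ᵀ * (M k)⁻¹) :
    ∀ i < N, MBt i = MB i * (Mt (i + 1))ᵀ * (M (i + 1))⁻¹
  | 0, _ => h0'
  | i + 1, hi => hrec' (i + 2) (by omega) hi

theorem forward_info_diag_eq_backward (hN : 1 ≤ N)
    (h0 : (MB 0)⁻¹ = (M 0)⁻¹ + (Mt 1)ᵀ * (M 1)⁻¹ * Mt 1)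
    (hrec : ∀ k, 2 ≤ k → k ≤ N →
      (MB (k - 1))⁻¹ = (M (k - 1))⁻¹ + (Mt k)ᵀ * (M k)⁻¹ * Mt k
        - (MBt (k - 2))ᵀ * (MB (k - 2))⁻¹ * MBt (k - 2))
    (hN' : (MB N)⁻¹ = (M N)⁻¹ - (MBt (N - 1))ᵀ * (MB (N - 1))⁻¹ * MBt (N - 1)) :
    ∀ i ≤ N, (M i)⁻¹ + (if i < N then (Mt (i + 1))ᵀ * (M (i + 1))⁻¹ * Mt (i + 1) else 0) =
      (MB i)⁻¹ + if i = 0 then 0 else (MBt (i - 1))ᵀ * (MB (i - 1))⁻¹ * MBt (i - 1) := by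
  intro i hi
  rcases Nat.eq_zero_or_pos i with rfl | hi0
  · rw [if_pos (by omega), if_pos rfl, add_zero, h0]
  rcases hi.lt_or_eq with hiN | rfl
  · have h := hrec (i + 1) (by omega) (by omega)
    rw [Nat.add_sub_cancel, show i + 1 - 2 = i - 1 by omega] at h
    rw [if_pos hiN, if_neg hi0.ne', h, sub_add_cancel]
  · rw [if_neg (lt_irrefl i), if_neg hi0.ne', add_zero, hN', sub_add_cancel]

theorem lowerBidiagBlocks_gram_eq_upperBidiagBlocks_gram
    (hM : ∀ k ≤ N, (M k).IsSymm) (hMB : ∀ k ≤ N, IsUnit (MB k).det)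
    (hMBsymm : ∀ k ≤ N, (MB k).IsSymm)
    (htrans : ∀ i < N, MBt i = MB i * (Mt (i + 1))ᵀ * (M (i + 1))⁻¹)
    (hdiag : ∀ i ≤ N, (M i)⁻¹ + (if i < N then (Mt (i + 1))ᵀ * (M (i + 1))⁻¹ * Mt (i + 1) else 0) =
      (MB i)⁻¹ + if i = 0 then 0 else (MBt (i - 1))ᵀ * (MB (i - 1))⁻¹ * MBt (i - 1)) :
    (ofBlocks N (lowerBidiagBlocks Mt))ᵀ * ofBlocks N (diagBlocks fun k => (M k)⁻¹) *
        ofBlocks N (lowerBidiagBlocks Mt) =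
      (ofBlocks N (upperBidiagBlocks MBt))ᵀ * ofBlocks N (diagBlocks fun k => (MB k)⁻¹) *
        ofBlocks N (upperBidiagBlocks MBt) := by
  rw [lowerBidiagBlocks_gram, upperBidiagBlocks_gram]
  have hU : ∀ i < N, -((Mt (i + 1))ᵀ * (M (i + 1))⁻¹) = -((MB i)⁻¹ * MBt i) := by
    intro i hi
    rw [htrans i hi, ← Matrix.mul_assoc, ← Matrix.mul_assoc, nonsing_inv_mul _ (hMB i hi.le),
      Matrix.one_mul]
  refine ofBlocks_tridiagBlocks_congr hdiag (fun i hi0 hi => ?_) hU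
  -- the subdiagonal blocks are the transposes of the superdiagonal ones
  have h := congrArg transpose (hU (i - 1) (by omega))
  rw [Nat.sub_add_cancel hi0] at h
  simpa only [transpose_neg, transpose_mul, transpose_transpose, (hM i hi).inv.eq,
    (hMBsymm (i - 1) (by omega)).inv.eq] using h

end BackwardMarkov

theorem stmt_12 {N d : ℕ} (hN : 2 ≤ N)
    -- forward parameters: covariances `M k` (k = 0, …, N) and transitions `Mt k = M_{k,k-1}`
    (M Mt : ℕ → Matrix (Fin d) (Fin d) ℝ)
    (hM : ∀ k ≤ N, (M k).PosDef)
    -- backward parameters: covariances `MB k` (k = 0, …, N) and transitions `MBt k = M^B_{k,k+1}`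
    (MB MBt : ℕ → Matrix (Fin d) (Fin d) ℝ)
    (hMB : ∀ k ≤ N, (MB k).PosDef)
    (h0 : (MB 0)⁻¹ = (M 0)⁻¹ + (Mt 1)ᵀ * (M 1)⁻¹ * Mt 1)
    (h0' : MBt 0 = MB 0 * (Mt 1)ᵀ * (M 1)⁻¹)
    (hrec : ∀ k, 2 ≤ k → k ≤ N →
      (MB (k - 1))⁻¹ = (M (k - 1))⁻¹ + (Mt k)ᵀ * (M k)⁻¹ * Mt k
        - (MBt (k - 2))ᵀ * (MB (k - 2))⁻¹ * MBt (k - 2))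
    (hrec' : ∀ k, 2 ≤ k → k ≤ N →
      MBt (k - 1) = MB (k - 1) * (Mt k)ᵀ * (M k)⁻¹)
    (hN' : (MB N)⁻¹ = (M N)⁻¹ - (MBt (N - 1))ᵀ * (MB (N - 1))⁻¹ * MBt (N - 1)) :
    -- block model matrices
    let T_F : Matrix (Fin (N + 1) × Fin d) (Fin (N + 1) × Fin d) ℝ :=
      Matrix.of fun p q =>
        if (p.1 : ℕ) = (q.1 : ℕ) then (1 : Matrix (Fin d) (Fin d) ℝ) p.2 q.2
        else if (p.1 : ℕ) = (q.1 : ℕ) + 1 then (-(Mt (p.1 : ℕ))) p.2 q.2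
        else 0
    let P_F : Matrix (Fin (N + 1) × Fin d) (Fin (N + 1) × Fin d) ℝ :=
      Matrix.of fun p q =>
        if (p.1 : ℕ) = (q.1 : ℕ) then (M (p.1 : ℕ)) p.2 q.2 else 0
    let T_B : Matrix (Fin (N + 1) × Fin d) (Fin (N + 1) × Fin d) ℝ :=
      Matrix.of fun p q =>
        if (p.1 : ℕ) = (q.1 : ℕ) then (1 : Matrix (Fin d) (Fin d) ℝ) p.2 q.2
        else if (q.1 : ℕ) = (p.1 : ℕ) + 1 then (-(MBt (p.1 : ℕ))) p.2 q.2
        else 0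
    let P_B : Matrix (Fin (N + 1) × Fin d) (Fin (N + 1) × Fin d) ℝ :=
      Matrix.of fun p q =>
        if (p.1 : ℕ) = (q.1 : ℕ) then (MB (p.1 : ℕ)) p.2 q.2 else 0
    let B : Matrix (Fin (N + 1) × Fin d) (Fin (N + 1) × Fin d) ℝ :=
      P_B * (T_Bᵀ)⁻¹ * T_Fᵀ * P_F⁻¹
    B * P_F * Bᵀ = P_B := by
  intro T_F P_F T_B P_B B
  have hTF : T_F = ofBlocks N (lowerBidiagBlocks Mt) := by
    ext p q; simp only [T_F, of_apply, ofBlocks_apply, lowerBidiagBlocks]; split_ifs <;> rfl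
  have hTB : T_B = ofBlocks N (upperBidiagBlocks MBt) := by
    ext p q; simp only [T_B, of_apply, ofBlocks_apply, upperBidiagBlocks]; split_ifs <;> rfl
  have hPF : P_F = ofBlocks N (diagBlocks M) := by
    ext p q; simp only [P_F, of_apply, ofBlocks_apply, diagBlocks]; split_ifs <;> rfl
  have hPB : P_B = ofBlocks N (diagBlocks MB) := by
    ext p q; simp only [P_B, of_apply, ofBlocks_apply, diagBlocks]; split_ifs <;> rfl
  have hMunit k (hk : k ≤ N) : IsUnit (M k).det := (hM k hk).det_pos.ne'.isUnit
  have hMBunit k (hk : k ≤ N) : IsUnit (MB k).det := (hMB k hk).det_pos.ne'.isUnit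
  have hMsymm k (hk : k ≤ N) : (M k).IsSymm := isHermitian_iff_isSymm.1 (hM k hk).isHermitian
  have hMBsymm k (hk : k ≤ N) : (MB k).IsSymm := isHermitian_iff_isSymm.1 (hMB k hk).isHermitian
  simp only [B]
  rw [hTF, hTB, hPF, hPB]
  refine mul_mul_transpose_eq_of_gram_eq (isUnit_det_ofBlocks_diagBlocks hMunit)
    (isUnit_det_ofBlocks_diagBlocks hMBunit)
    (by rw [det_ofBlocks_upperBidiagBlocks]; exact isUnit_one)
    (isSymm_ofBlocks_diagBlocks hMsymm) (isSymm_ofBlocks_diagBlocks hMBsymm) ?_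
  rw [inv_ofBlocks_diagBlocks hMunit, inv_ofBlocks_diagBlocks hMBunit]
  exact lowerBidiagBlocks_gram_eq_upperBidiagBlocks_gram hMsymm hMBunit hMBsymm
    (backward_transition_eq h0' hrec')
    (forward_info_diag_eq_backward (by omega) h0 hrec hN')
end

section
/- Let N ≥ 3. Let G₀, …, G_N be symmetric positive definite d×d real matrices, G_{k,k-1} (k = 1, …, N−1) and G_{k,N} (k = 0, …, N−1) arbitrary d×d real matrices, and assume the reciprocal condition G_k⁻¹ G_{k,N} = G_{k+1,k}ᵀ G_{k+1}⁻¹ G_{k+1,N} holds for all k = 1, …, N−2. Define: R⁰₀ = G₀⁻¹ + G_{1,0}ᵀ G₁⁻¹ G_{1,0}; R⁰_k = G_k⁻¹ + G_{k+1,k}ᵀ G_{k+1}⁻¹ G_{k+1,k} for k = 1, …, N−2; R⁰_{N-1} = G_{N-1}⁻¹; R⁰_N = G_N⁻¹ + Σ_{k=1}^{N-1} G_{k,N}ᵀ G_k⁻¹ G_{k,N} + G_{0,N}ᵀ G₀⁻¹ G_{0,N}; R⁺_k = G_{k+1,k}ᵀ G_{k+1}⁻¹ for k = 0, …, N−2;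 R⁺_{N-1} = G_{N-1}⁻¹ G_{N-1,N}; R⁻₀ = G₀⁻¹ G_{0,N} − G_{1,0}ᵀ G₁⁻¹ G_{1,N}; R⁻_k = (R⁺_{k-1})ᵀ for k = 1, …, N; R⁺_N = (R⁻₀)ᵀ. Let 𝒢 be the (N+1)×(N+1) block matrix with identity blocks on the diagonal, blocks −G_{k,k-1} in positions (k, k−1) for k = 1, …, N−1, blocks −G_{k,N} in positions (k, N) for k = 0, …, N−1, and zero elsewhere; let G be the block-diagonal matrix with blocks G₀, …, G_N; and let ℛ be the cyclic block tridiagonal matrix with diagonal blocks R⁰_k, blocks −R⁺_k in positions (k, k+1), blocks −R⁻_k in positions (k, k−1), block −R⁻₀ in position (0, N), and block −R⁺_N in position (N, 0). Then ℛ = 𝒢ᵀ * G⁻¹ * 𝒢. -/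
/-!
The identity `ℛ = 𝒢ᵀ G⁻¹ 𝒢` is checked block by block. Apart from its identity diagonal, column
`i < N` of `𝒢` has only the block `-G_{i+1,i}` in row `i + 1`, so block `(i, j)` of `𝒢ᵀ G⁻¹ 𝒢` is a
sum of at most two terms, and these reproduce the formulas for `R⁰_i`, `R⁺_i`, `R⁻_i`. In
positions `(i, N)` with `1 ≤ i ≤ N - 2`, where `ℛ` vanishes, the two terms cancel exactly by the
reciprocal condition. Both matrices are symmetric, which gives the last block row; the corner
`(N, N)` collects the whole last column of `𝒢`.
-/

open Matrix Finset

namespace Matrix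

variable {I K R : Type*} [Fintype I] [DecidableEq I] [Fintype K] [DecidableEq K]

theorem comp_transpose_mul_diagonal_mul [Semiring R] (A B : Matrix I I (Matrix K K R))
    (D : I → Matrix K K R) :
    (comp I I K K R A)ᵀ * comp I I K K R (diagonal D) * comp I I K K R B
      = comp I I K K R (of fun i j => ∑ k, (A k i)ᵀ * D k * B k j) := by
  rw [transpose_comp]
  simp only [← compRingEquiv_apply]
  rw [← map_mul, ← map_mul]
  congr 1
  ext1 i j
  simp [mul_apply, diagonal]

theorem inv_comp_diagonal [CommRing R] (D : I → Matrix K K R) (hD : ∀ i, IsUnit (D i)) :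
    (comp I I K K R (diagonal D))⁻¹ = comp I I K K R (diagonal fun i => (D i)⁻¹) := by
  refine inv_eq_right_inv ?_
  rw [← compRingEquiv_apply, ← compRingEquiv_apply, ← map_mul, diagonal_mul_diagonal]
  simp [mul_nonsing_inv _ ((isUnit_iff_isUnit_det _).mp (hD _)), comp_one]

end Matrix

section
variable {n R : Type*} [DecidableEq n] [Ring R]

/-- Block `(k, i)` of `𝒢`, with block indices read in `ℕ`. -/
def cmlBlock (N : ℕ) (Gt GN : ℕ → Matrix n n R) (k i : ℕ) : Matrix n n R :=
  if k = i then 1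
  else if i = N ∧ k < N then -GN k
  else if k = i + 1 ∧ k < N then -Gt k
  else 0

variable {N : ℕ} {Gt GN : ℕ → Matrix n n R}

@[simp] theorem cmlBlock_self (k : ℕ) : cmlBlock N Gt GN k k = 1 := if_pos rfl

theorem cmlBlock_last {k : ℕ} (hk : k < N) : cmlBlock N Gt GN k N = -GN k := by
  simp [cmlBlock, hk, hk.ne]

theorem cmlBlock_succ {i : ℕ} (hi : i + 1 < N) : cmlBlock N Gt GN (i + 1) i = -Gt (i + 1) := by
  simp [cmlBlock, hi, show i ≠ N by omega]

theorem cmlBlock_succ_eq_zero {i : ℕ} (hi : i + 1 = N) : cmlBlock N Gt GN (i + 1) i = 0 := by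
  subst hi
  simp [cmlBlock]

theorem cmlBlock_eq_zero {k i : ℕ} (hi : i < N) (hki : k ≠ i) (hki' : k ≠ i + 1) :
    cmlBlock N Gt GN k i = 0 := by
  simp [cmlBlock, hki, hki', hi.ne]

end

section
variable {n R : Type*} [Fintype n] [DecidableEq n] [CommRing R]

def cmlGram (N : ℕ) (Gt GN W : ℕ → Matrix n n R) (i j : ℕ) : Matrix n n R :=
  ∑ k ∈ range (N + 1), (cmlBlock N Gt GN k i)ᵀ * W k * cmlBlock N Gt GN k j

variable {N : ℕ} {Gt GN W : ℕ → Matrix n n R}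

theorem cmlGram_transpose (hW : ∀ k ≤ N, (W k)ᵀ = W k) (i j : ℕ) :
    (cmlGram N Gt GN W i j)ᵀ = cmlGram N Gt GN W j i := by
  rw [cmlGram, transpose_sum]
  refine sum_congr rfl fun k hk => ?_
  rw [transpose_mul, transpose_mul, transpose_transpose,
    hW k (Nat.lt_succ_iff.mp (mem_range.mp hk)), Matrix.mul_assoc]

theorem cmlGram_last_last :
    cmlGram N Gt GN W N N = W N + ∑ k ∈ range N, (GN k)ᵀ * W k * GN k := by
  rw [cmlGram, sum_range_succ, add_comm]
  congr 1
  · simp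
  · exact sum_congr rfl fun k hk => by simp [cmlBlock_last (mem_range.mp hk)]

theorem cmlGram_of_lt {i : ℕ} (hi : i < N) (j : ℕ) :
    cmlGram N Gt GN W i j
      = W i * cmlBlock N Gt GN i j
        + (cmlBlock N Gt GN (i + 1) i)ᵀ * W (i + 1) * cmlBlock N Gt GN (i + 1) j := by
  rw [cmlGram, sum_eq_add_of_mem i (i + 1) (mem_range.mpr (by omega))
    (mem_range.mpr (by omega)) (by omega)]
  · simp
  · rintro k - ⟨hki, hki'⟩
    simp [cmlBlock_eq_zero hi hki hki']

theorem cmlGram_self_of_succ_lt {i : ℕ} (hi : i + 1 < N) :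
    cmlGram N Gt GN W i i = W i + (Gt (i + 1))ᵀ * W (i + 1) * Gt (i + 1) := by
  simp [cmlGram_of_lt (by omega : i < N), cmlBlock_succ hi]

theorem cmlGram_self_of_succ_eq {i : ℕ} (hi : i + 1 = N) :
    cmlGram N Gt GN W i i = W i := by
  simp [cmlGram_of_lt (by omega : i < N), cmlBlock_succ_eq_zero hi]

theorem cmlGram_succ_of_succ_lt {i : ℕ} (hi : i + 1 < N) :
    cmlGram N Gt GN W i (i + 1) = -((Gt (i + 1))ᵀ * W (i + 1)) := by
  simp [cmlGram_of_lt (by omega : i < N), cmlBlock_succ hi,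
    cmlBlock_eq_zero (by omega : i + 1 < N) (by omega : i ≠ i + 1) (by omega)]

theorem cmlGram_succ_of_succ_eq {i : ℕ} (hi : i + 1 = N) :
    cmlGram N Gt GN W i (i + 1) = -(W i * GN i) := by
  subst hi
  simp [cmlGram_of_lt (Nat.lt_succ_self i), cmlBlock_succ_eq_zero rfl,
    cmlBlock_last (Nat.lt_succ_self i)]

theorem cmlGram_succ_left {i : ℕ} (hi : i + 1 < N) :
    cmlGram N Gt GN W (i + 1) i = -(W (i + 1) * Gt (i + 1)) := by
  simp [cmlGram_of_lt hi, cmlBlock_succ hi,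
    cmlBlock_eq_zero (by omega : i < N) (by omega : i + 1 + 1 ≠ i) (by omega)]

theorem cmlGram_zero_last (hN : 2 ≤ N) :
    cmlGram N Gt GN W 0 N = -(W 0 * GN 0) + (Gt 1)ᵀ * W 1 * GN 1 := by
  simp [cmlGram_of_lt (by omega : 0 < N), cmlBlock_succ (by omega : 0 + 1 < N),
    cmlBlock_last (by omega : 0 < N), cmlBlock_last (by omega : 1 < N)]

theorem cmlGram_last_eq_zero {i : ℕ} (hi : i + 1 < N)
    (hrecip : W i * GN i = (Gt (i + 1))ᵀ * W (i + 1) * GN (i + 1)) :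
    cmlGram N Gt GN W i N = 0 := by
  simp [cmlGram_of_lt (by omega : i < N), cmlBlock_succ hi,
    cmlBlock_last (by omega : i < N), cmlBlock_last hi, hrecip]

theorem cmlGram_eq_zero {i j : ℕ} (hi : i < N) (hj : j < N) (hji : j ≠ i) (hji' : j ≠ i + 1)
    (hij : i ≠ j + 1) : cmlGram N Gt GN W i j = 0 := by
  rw [cmlGram_of_lt hi, cmlBlock_eq_zero hj (by omega) (by omega),
    cmlBlock_eq_zero hj (by omega) (by omega)]
  simp

end

section
variable {n R : Type*} [AddGroup R]

def recipBlock (N : ℕ) (R0 Rp Rm : ℕ → Matrix n n R) (i j : ℕ) : Matrix n n R :=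
  if i = j then R0 i
  else if j = i + 1 then -Rp i
  else if i = j + 1 then -Rm i
  else if i = 0 ∧ j = N then -Rm 0
  else if i = N ∧ j = 0 then -Rp N
  else 0

theorem recipBlock_last_eq_transpose {N j : ℕ} {R0 Rp Rm : ℕ → Matrix n n R}
    (hRm : Rm N = (Rp (N - 1))ᵀ) (hRp : Rp N = (Rm 0)ᵀ) (hj : j < N) :
    recipBlock N R0 Rp Rm N j = (recipBlock N R0 Rp Rm j N)ᵀ := by
  unfold recipBlock
  split_ifs <;> first | omega | simp_all
end

section
variable {n : Type*} [Fintype n] [DecidableEq n] {R : Type*} [CommRing R]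

structure ReciprocalParams (N : ℕ) (G Gt GN R0 Rp Rm : ℕ → Matrix n n R) : Prop where
  R0_zero : R0 0 = (G 0)⁻¹ + (Gt 1)ᵀ * (G 1)⁻¹ * Gt 1
  R0_of_le : ∀ k, 1 ≤ k → k ≤ N - 2 →
    R0 k = (G k)⁻¹ + (Gt (k + 1))ᵀ * (G (k + 1))⁻¹ * Gt (k + 1)
  R0_pred : R0 (N - 1) = (G (N - 1))⁻¹
  R0_last : R0 N = (G N)⁻¹ + (∑ k ∈ Icc 1 (N - 1), (GN k)ᵀ * (G k)⁻¹ * GN k)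
    + (GN 0)ᵀ * (G 0)⁻¹ * GN 0
  Rp_of_le : ∀ k ≤ N - 2, Rp k = (Gt (k + 1))ᵀ * (G (k + 1))⁻¹
  Rp_pred : Rp (N - 1) = (G (N - 1))⁻¹ * GN (N - 1)
  Rm_zero : Rm 0 = (G 0)⁻¹ * GN 0 - (Gt 1)ᵀ * (G 1)⁻¹ * GN 1
  Rm_of_le : ∀ k, 1 ≤ k → k ≤ N → Rm k = (Rp (k - 1))ᵀ
  Rp_last : Rp N = (Rm 0)ᵀ

variable {N : ℕ} {G Gt GN R0 Rp Rm : ℕ → Matrix n n R}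

theorem ReciprocalParams.recipBlock_eq_cmlGram_of_lt (hR : ReciprocalParams N G Gt GN R0 Rp Rm)
    (hN : 2 ≤ N) (hsymm : ∀ k ≤ N, ((G k)⁻¹)ᵀ = (G k)⁻¹)
    (hrecip : ∀ k, 1 ≤ k → k ≤ N - 2 →
      (G k)⁻¹ * GN k = (Gt (k + 1))ᵀ * (G (k + 1))⁻¹ * GN (k + 1))
    {i : ℕ} (hi : i < N) {j : ℕ} (hj : j ≤ N) :
    recipBlock N R0 Rp Rm i j = cmlGram N Gt GN (fun k => (G k)⁻¹) i j := by
  obtain rfl | hji := eq_or_ne j i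
  · rw [recipBlock, if_pos rfl]
    rcases (Nat.succ_le_of_lt hi).lt_or_eq with hj' | hj'
    · rw [cmlGram_self_of_succ_lt hj']
      rcases Nat.eq_zero_or_pos j with rfl | hj0
      · exact hR.R0_zero
      · exact hR.R0_of_le j hj0 (by omega)
    · rw [cmlGram_self_of_succ_eq hj', show j = N - 1 by omega, hR.R0_pred]
  obtain rfl | hji' := eq_or_ne j (i + 1)
  · rw [recipBlock, if_neg (by omega), if_pos rfl]
    rcases (Nat.succ_le_of_lt hi).lt_or_eq with hi' | hi'
    · rw [cmlGram_succ_of_succ_lt hi', hR.Rp_of_le i (by omega)]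
    · rw [cmlGram_succ_of_succ_eq hi', show i = N - 1 by omega, hR.Rp_pred]
  obtain rfl | hij := eq_or_ne i (j + 1)
  · rw [recipBlock, if_neg (by omega), if_neg (by omega), if_pos rfl, cmlGram_succ_left hi,
      hR.Rm_of_le (j + 1) (by omega) (by omega), Nat.add_sub_cancel, hR.Rp_of_le j (by omega),
      transpose_mul, hsymm _ (by omega), transpose_transpose]
  obtain rfl | hjN := eq_or_ne j N
  · rcases Nat.eq_zero_or_pos i with rfl | hi0
    · rw [recipBlock, if_neg (by omega), if_neg (by omega), if_neg (by omega), if_pos ⟨rfl, rfl⟩,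
        cmlGram_zero_last hN, hR.Rm_zero, neg_sub, sub_eq_neg_add]
    · rw [recipBlock, if_neg (by omega), if_neg (by omega), if_neg (by omega), if_neg (by omega),
        if_neg (by omega), cmlGram_last_eq_zero (by omega) (hrecip i hi0 (by omega))]
  · rw [recipBlock, if_neg (by omega), if_neg (by omega), if_neg (by omega), if_neg (by omega),
      if_neg (by omega), cmlGram_eq_zero hi (by omega) hji hji' hij]

theorem ReciprocalParams.recipBlock_eq_cmlGram (hR : ReciprocalParams N G Gt GN R0 Rp Rm)
    (hN : 2 ≤ N) (hsymm : ∀ k ≤ N, ((G k)⁻¹)ᵀ = (G k)⁻¹)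
    (hrecip : ∀ k, 1 ≤ k → k ≤ N - 2 →
      (G k)⁻¹ * GN k = (Gt (k + 1))ᵀ * (G (k + 1))⁻¹ * GN (k + 1))
    {i j : ℕ} (hi : i ≤ N) (hj : j ≤ N) :
    recipBlock N R0 Rp Rm i j = cmlGram N Gt GN (fun k => (G k)⁻¹) i j := by
  rcases hi.lt_or_eq with hi | hi
  · exact hR.recipBlock_eq_cmlGram_of_lt hN hsymm hrecip hi hj
  subst i
  rcases hj.lt_or_eq with hj | hj
  · rw [recipBlock_last_eq_transpose (hR.Rm_of_le N (by omega) le_rfl) hR.Rp_last hj,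
      hR.recipBlock_eq_cmlGram_of_lt hN hsymm hrecip hj le_rfl, cmlGram_transpose hsymm]
  · subst j
    rw [recipBlock, if_pos rfl, cmlGram_last_last, hR.R0_last,
      Nat.range_eq_Icc_zero_sub_one N (by omega), Icc_eq_cons_Ioc (Nat.zero_le _), sum_cons,
      ← Icc_add_one_left_eq_Ioc, zero_add]
    abel

end

theorem stmt_13 {N d : ℕ} (hN : 3 ≤ N)
    -- CM_L parameters: covariances `G k` (k = 0, …, N), transitions `Gt k = G_{k,k-1}`
    -- (k = 1, …, N−1), and `GN k = G_{k,N}` (k = 0, …, N−1)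
    (G Gt GN : ℕ → Matrix (Fin d) (Fin d) ℝ)
    (hG : ∀ k ≤ N, (G k).PosDef)
    -- the reciprocal condition
    (hrecip : ∀ k, 1 ≤ k → k ≤ N - 2 →
      (G k)⁻¹ * GN k = (Gt (k + 1))ᵀ * (G (k + 1))⁻¹ * GN (k + 1))
    -- the reciprocal-model parameters
    (R0 Rp Rm : ℕ → Matrix (Fin d) (Fin d) ℝ)
    (hR0_0 : R0 0 = (G 0)⁻¹ + (Gt 1)ᵀ * (G 1)⁻¹ * Gt 1)
    (hR0_k : ∀ k, 1 ≤ k → k ≤ N - 2 →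
      R0 k = (G k)⁻¹ + (Gt (k + 1))ᵀ * (G (k + 1))⁻¹ * Gt (k + 1))
    (hR0_N1 : R0 (N - 1) = (G (N - 1))⁻¹)
    (hR0_N : R0 N = (G N)⁻¹ + (∑ k ∈ Finset.Icc 1 (N - 1), (GN k)ᵀ * (G k)⁻¹ * GN k)
      + (GN 0)ᵀ * (G 0)⁻¹ * GN 0)
    (hRp_k : ∀ k ≤ N - 2, Rp k = (Gt (k + 1))ᵀ * (G (k + 1))⁻¹)
    (hRp_N1 : Rp (N - 1) = (G (N - 1))⁻¹ * GN (N - 1))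
    (hRm_0 : Rm 0 = (G 0)⁻¹ * GN 0 - (Gt 1)ᵀ * (G 1)⁻¹ * GN 1)
    (hRm_k : ∀ k, 1 ≤ k → k ≤ N → Rm k = (Rp (k - 1))ᵀ)
    (hRp_N : Rp N = (Rm 0)ᵀ) :
    -- block model matrices
    let 𝒢 : Matrix (Fin (N + 1) × Fin d) (Fin (N + 1) × Fin d) ℝ :=
      Matrix.of fun p q =>
        if (p.1 : ℕ) = (q.1 : ℕ) then (1 : Matrix (Fin d) (Fin d) ℝ) p.2 q.2
        else if (q.1 : ℕ) = N ∧ (p.1 : ℕ) < N then (-(GN (p.1 : ℕ))) p.2 q.2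
        else if (p.1 : ℕ) = (q.1 : ℕ) + 1 ∧ (p.1 : ℕ) < N then (-(Gt (p.1 : ℕ))) p.2 q.2
        else 0
    let Gblk : Matrix (Fin (N + 1) × Fin d) (Fin (N + 1) × Fin d) ℝ :=
      Matrix.of fun p q =>
        if (p.1 : ℕ) = (q.1 : ℕ) then (G (p.1 : ℕ)) p.2 q.2 else 0
    let ℛ : Matrix (Fin (N + 1) × Fin d) (Fin (N + 1) × Fin d) ℝ :=
      Matrix.of fun p q =>
        if (p.1 : ℕ) = (q.1 : ℕ) then (R0 (p.1 : ℕ)) p.2 q.2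
        else if (q.1 : ℕ) = (p.1 : ℕ) + 1 then (-(Rp (p.1 : ℕ))) p.2 q.2
        else if (p.1 : ℕ) = (q.1 : ℕ) + 1 then (-(Rm (p.1 : ℕ))) p.2 q.2
        else if (p.1 : ℕ) = 0 ∧ (q.1 : ℕ) = N then (-(Rm 0)) p.2 q.2
        else if (p.1 : ℕ) = N ∧ (q.1 : ℕ) = 0 then (-(Rp N)) p.2 q.2
        else 0
    ℛ = 𝒢ᵀ * Gblk⁻¹ * 𝒢 := by
  intro 𝒢 Gblk ℛ
  have hsymm : ∀ k ≤ N, ((G k)⁻¹)ᵀ = (G k)⁻¹ := fun k hk =>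
    (isHermitian_iff_isSymm.mp (hG k hk).isHermitian.inv).eq
  have hR : ReciprocalParams N G Gt GN R0 Rp Rm :=
    ⟨hR0_0, hR0_k, hR0_N1, hR0_N, hRp_k, hRp_N1, hRm_0, hRm_k, hRp_N⟩
  have h𝒢 : 𝒢 = comp _ _ _ _ _ (of fun k i : Fin (N + 1) => cmlBlock N Gt GN k i) := by
    ext p q
    simp only [𝒢, cmlBlock, comp_apply, of_apply]
    split_ifs <;> rfl
  have hGblk : Gblk = comp _ _ _ _ _ (diagonal fun k : Fin (N + 1) => G k) := by
    ext p q
    simp only [Gblk, comp_apply, of_apply, diagonal_apply, Fin.val_inj]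
    split_ifs <;> simp_all
  have hℛ : ℛ = comp _ _ _ _ _ (of fun i j : Fin (N + 1) => recipBlock N R0 Rp Rm i j) := by
    ext p q
    simp only [ℛ, recipBlock, comp_apply, of_apply]
    split_ifs <;> rfl
  rw [h𝒢, hGblk, hℛ,
    inv_comp_diagonal (fun k : Fin (N + 1) => G k) fun k => (hG k k.is_le).isUnit,
    comp_transpose_mul_diagonal_mul]
  congr 1
  ext1 i j
  exact (hR.recipBlock_eq_cmlGram (by omega) hsymm hrecip i.is_le j.is_le).trans
    (Fin.sum_univ_eq_sum_range _ _).symm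
end

section
/- Let N ≥ 3 and adopt the hypotheses and definitions of the reciprocal-parameter construction: G₀, …, G_N symmetric positive definite d×d real matrices, matrices G_{k,k-1} (k = 1, …, N−1) and G_{k,N} (k = 0, …, N−1) satisfying G_k⁻¹ G_{k,N} = G_{k+1,k}ᵀ G_{k+1}⁻¹ G_{k+1,N} for k = 1, …, N−2, and R⁰_k, R⁺_k, R⁻_k defined by: R⁰₀ = G₀⁻¹ + G_{1,0}ᵀ G₁⁻¹ G_{1,0}; R⁰_k = G_k⁻¹ + G_{k+1,k}ᵀ G_{k+1}⁻¹ G_{k+1,k} (k = 1, …, N−2); R⁰_{N-1} = G_{N-1}⁻¹; R⁰_N = G_N⁻¹ + Σ_{k=1}^{N-1} G_{k,N}ᵀ G_k⁻¹ G_{k,N} + G_{0,N}ᵀ G₀⁻¹ G_{0,N}; R⁺_k = G_{k+1,k}ᵀ G_{k+1}⁻¹ (k = 0, …, N−2); R⁺_{N-1} = G_{N-1}⁻¹ G_{N-1,N}; R⁻₀ = G₀⁻¹ G_{0,N} − G_{1,0}ᵀ G₁⁻¹ G_{1,N}; R⁻_k = (R⁺_{k-1})ᵀ (k = 1, …, N);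 R⁺_N = (R⁻₀)ᵀ. Suppose vectors x_k, e_k ∈ ℝ^d satisfy the CM_L model: x_N = e_N, x₀ = G_{0,N} x_N + e₀, and x_k = G_{k,k-1} x_{k-1} + G_{k,N} x_N + e_k for k = 1, …, N−1. Define e^R₀ = G₀⁻¹ e₀ − G_{1,0}ᵀ G₁⁻¹ e₁; e^R_k = G_k⁻¹ e_k − G_{k+1,k}ᵀ G_{k+1}⁻¹ e_{k+1} for k = 1, …, N−2; e^R_{N-1} = G_{N-1}⁻¹ e_{N-1}; and e^R_N = −Σ_{k=1}^{N-1} G_{k,N}ᵀ G_k⁻¹ e_k + G_N⁻¹ e_N − G_{0,N}ᵀ G₀⁻¹ e₀. Then: R⁰_k x_k − R⁻_k x_{k-1} − R⁺_k x_{k+1} = e^R_k for all k = 1, …, N−1; R⁰₀ x₀ − R⁻₀ x_N − R⁺₀ x₁ = e^R₀; and R⁰_N x_N − R⁻_N x_{N-1} − R⁺_N x₀ = e^R_N. -/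
open Matrix

/-!
Each interior reciprocal equation is `G_k⁻¹` times the CM_L equation at `k` minus
`G_{k+1,k}ᵀ G_{k+1}⁻¹` times the one at `k + 1`; the reciprocal condition is exactly what makes
the `x_N` terms cancel. At the boundary `N`, the noise terms `G_{k,N}ᵀ G_k⁻¹ e_k` telescope,
because the transposed reciprocal condition reads `G_{k,N}ᵀ G_k⁻¹ = G_{k+1,N}ᵀ G_{k+1}⁻¹ G_{k+1,k}`.
-/

lemma Matrix.PosDef.transpose_inv_eq {n : Type*} [Fintype n] [DecidableEq n]
    {G : Matrix n n ℝ} (hG : G.PosDef) :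
    (G⁻¹)ᵀ = G⁻¹ := by
  simpa [conjTranspose_eq_transpose_of_trivial] using hG.isHermitian.inv.eq

section Reciprocal

variable {m R : Type*} [Fintype m] [CommRing R]

lemma reciprocal_eq_of_cml_step {S P T T' A A' : Matrix m m R} {x₀ x₁ x₂ z e₁ e₂ : m → R}
    (hx₁ : x₁ = T *ᵥ x₀ + A *ᵥ z + e₁) (hx₂ : x₂ = T' *ᵥ x₁ + A' *ᵥ z + e₂)
    (hA : S * A = P * A') :
    (S + P * T') *ᵥ x₁ - (S * T) *ᵥ x₀ - P *ᵥ x₂ = S *ᵥ e₁ - P *ᵥ e₂ := by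
  have hz : S *ᵥ A *ᵥ z = P *ᵥ A' *ᵥ z := by simp only [mulVec_mulVec, hA]
  subst hx₂
  rw [hx₁]
  simp only [add_mulVec, mulVec_add, ← mulVec_mulVec, hz]
  abel

lemma reciprocal_eq_of_cml_last {S T A : Matrix m m R} {x₀ x₁ z e : m → R}
    (hx₁ : x₁ = T *ᵥ x₀ + A *ᵥ z + e) :
    S *ᵥ x₁ - (S * T) *ᵥ x₀ - (S * A) *ᵥ z = S *ᵥ e := by
  simp only [hx₁, mulVec_add, ← mulVec_mulVec]
  abel

lemma reciprocal_eq_of_cml_first {S P T A₀ A : Matrix m m R} {x₀ x₁ z e₀ e₁ : m → R}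
    (hx₀ : x₀ = A₀ *ᵥ z + e₀) (hx₁ : x₁ = T *ᵥ x₀ + A *ᵥ z + e₁) :
    (S + P * T) *ᵥ x₀ - (S * A₀ - P * A) *ᵥ z - P *ᵥ x₁ = S *ᵥ e₀ - P *ᵥ e₁ := by
  subst hx₁
  rw [hx₀]
  simp only [add_mulVec, sub_mulVec, mulVec_add, ← mulVec_mulVec]
  abel

lemma sum_Icc_mulVec_noise_telescope {M : ℕ} (hM : 1 ≤ M) {B T A : ℕ → Matrix m m R}
    {x e : ℕ → m → R} {z : m → R}
    (hx : ∀ k, 1 ≤ k → k ≤ M → x k = T k *ᵥ x (k - 1) + A k *ᵥ z + e k)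
    (hB : ∀ k, 1 ≤ k → k < M → B k = B (k + 1) * T (k + 1)) :
    ∑ k ∈ Finset.Icc 1 M, B k *ᵥ e k
      = B M *ᵥ x M - (B 1 * T 1) *ᵥ x 0 - (∑ k ∈ Finset.Icc 1 M, B k * A k) *ᵥ z := by
  induction M, hM using Nat.le_induction with
  | base =>
    simp only [Finset.Icc_self, Finset.sum_singleton, hx 1 le_rfl le_rfl, mulVec_add,
      ← mulVec_mulVec]
    abel
  | succ M hM ih =>
    rw [Finset.sum_Icc_succ_top (by omega), Finset.sum_Icc_succ_top (by omega),
      ih (fun k h1 h2 => hx k h1 (by omega)) (fun k h1 h2 => hB k h1 (by omega)),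
      hx (M + 1) (by omega) le_rfl, hB M hM (by omega)]
    simp only [add_mulVec, mulVec_add, ← mulVec_mulVec, Nat.add_sub_cancel]
    abel

end Reciprocal

theorem stmt_14 {N d : ℕ} (hN : 3 ≤ N)
    -- CM_L parameters: covariances `G k` (k = 0, …, N), transitions `Gt k = G_{k,k-1}`
    -- (k = 1, …, N−1), and `GN k = G_{k,N}` (k = 0, …, N−1)
    (G Gt GN : ℕ → Matrix (Fin d) (Fin d) ℝ)
    (hG : ∀ k ≤ N, (G k).PosDef)
    -- the reciprocal condition
    (hrecip : ∀ k, 1 ≤ k → k ≤ N - 2 →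
      (G k)⁻¹ * GN k = (Gt (k + 1))ᵀ * (G (k + 1))⁻¹ * GN (k + 1))
    -- the reciprocal-model parameters
    (R0 Rp Rm : ℕ → Matrix (Fin d) (Fin d) ℝ)
    (hR0_0 : R0 0 = (G 0)⁻¹ + (Gt 1)ᵀ * (G 1)⁻¹ * Gt 1)
    (hR0_k : ∀ k, 1 ≤ k → k ≤ N - 2 →
      R0 k = (G k)⁻¹ + (Gt (k + 1))ᵀ * (G (k + 1))⁻¹ * Gt (k + 1))
    (hR0_N1 : R0 (N - 1) = (G (N - 1))⁻¹)
    (hR0_N : R0 N = (G N)⁻¹ + (∑ k ∈ Finset.Icc 1 (N - 1), (GN k)ᵀ * (G k)⁻¹ * GN k)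
      + (GN 0)ᵀ * (G 0)⁻¹ * GN 0)
    (hRp_k : ∀ k ≤ N - 2, Rp k = (Gt (k + 1))ᵀ * (G (k + 1))⁻¹)
    (hRp_N1 : Rp (N - 1) = (G (N - 1))⁻¹ * GN (N - 1))
    (hRm_0 : Rm 0 = (G 0)⁻¹ * GN 0 - (Gt 1)ᵀ * (G 1)⁻¹ * GN 1)
    (hRm_k : ∀ k, 1 ≤ k → k ≤ N → Rm k = (Rp (k - 1))ᵀ)
    (hRp_N : Rp N = (Rm 0)ᵀ)
    -- sample paths: states `x k`, CM_L noises/boundary values `e k`,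
    -- reciprocal noises/boundary values `eR k`
    (x e eR : ℕ → Fin d → ℝ)
    -- the CM_L model
    (hxN : x N = e N)
    (hx0 : x 0 = GN 0 *ᵥ x N + e 0)
    (hxk : ∀ k, 1 ≤ k → k ≤ N - 1 → x k = Gt k *ᵥ x (k - 1) + GN k *ᵥ x N + e k)
    -- the correspondence defining the reciprocal noises and boundary values
    (he0 : eR 0 = (G 0)⁻¹ *ᵥ e 0 - ((Gt 1)ᵀ * (G 1)⁻¹) *ᵥ e 1)
    (hek : ∀ k, 1 ≤ k → k ≤ N - 2 →
      eR k = (G k)⁻¹ *ᵥ e k - ((Gt (k + 1))ᵀ * (G (k + 1))⁻¹) *ᵥ e (k + 1))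
    (heN1 : eR (N - 1) = (G (N - 1))⁻¹ *ᵥ e (N - 1))
    (heN : eR N = -(∑ k ∈ Finset.Icc 1 (N - 1), ((GN k)ᵀ * (G k)⁻¹) *ᵥ e k)
      + (G N)⁻¹ *ᵥ e N - ((GN 0)ᵀ * (G 0)⁻¹) *ᵥ e 0) :
    -- the reciprocal model holds for the same sample path
    (∀ k, 1 ≤ k → k ≤ N - 1 →
        R0 k *ᵥ x k - Rm k *ᵥ x (k - 1) - Rp k *ᵥ x (k + 1) = eR k) ∧
    R0 0 *ᵥ x 0 - Rm 0 *ᵥ x N - Rp 0 *ᵥ x 1 = eR 0 ∧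
    R0 N *ᵥ x N - Rm N *ᵥ x (N - 1) - Rp N *ᵥ x 0 = eR N := by
  have hS : ∀ k ≤ N, ((G k)⁻¹)ᵀ = (G k)⁻¹ := fun k hk => (hG k hk).transpose_inv_eq
  refine ⟨fun k hk1 hk2 => ?_, ?_, ?_⟩
  · have hRm : Rm k = (G k)⁻¹ * Gt k := by
      rw [hRm_k k hk1 (by omega), hRp_k (k - 1) (by omega), Nat.sub_add_cancel hk1,
        transpose_mul, transpose_transpose, hS k (by omega)]
    rcases (show k ≤ N - 2 ∨ k = N - 1 by omega) with hk | rfl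
    · rw [hR0_k k hk1 hk, hRm, hRp_k k hk, hek k hk1 hk]
      refine reciprocal_eq_of_cml_step (hxk k hk1 hk2) ?_ (hrecip k hk1 hk)
      simpa using hxk (k + 1) (by omega) (by omega)
    · rw [hR0_N1, hRm, hRp_N1, heN1, Nat.sub_add_cancel (by omega)]
      exact reciprocal_eq_of_cml_last (hxk _ hk1 le_rfl)
  · have hRp0 : Rp 0 = (Gt 1)ᵀ * (G 1)⁻¹ := hRp_k 0 (Nat.zero_le _)
    rw [hR0_0, hRm_0, hRp0, he0]
    exact reciprocal_eq_of_cml_first hx0 (by simpa using hxk 1 le_rfl (by omega))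
  · have hRmN : Rm N = (GN (N - 1))ᵀ * (G (N - 1))⁻¹ := by
      rw [hRm_k N (by omega) le_rfl, hRp_N1, transpose_mul, hS _ (by omega)]
    have hRpN : Rp N = (GN 0)ᵀ * (G 0)⁻¹ - (GN 1)ᵀ * (G 1)⁻¹ * Gt 1 := by
      rw [hRp_N, hRm_0, transpose_sub, transpose_mul, transpose_mul, transpose_mul,
        transpose_transpose, hS 0 (by omega), hS 1 (by omega), Matrix.mul_assoc]
    have hrecipT : ∀ k, 1 ≤ k → k < N - 1 →
        (GN k)ᵀ * (G k)⁻¹ = (GN (k + 1))ᵀ * (G (k + 1))⁻¹ * Gt (k + 1) := fun k hk1 hk2 => by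
      simpa [transpose_mul, hS k (by omega), hS (k + 1) (by omega), Matrix.mul_assoc]
        using congrArg transpose (hrecip k hk1 (by omega))
    rw [hR0_N, hRmN, hRpN, heN, sum_Icc_mulVec_noise_telescope (by omega) hxk hrecipT, hx0, hxN]
    simp only [add_mulVec, sub_mulVec, mulVec_add, ← mulVec_mulVec]
    abel
end
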